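/- arXiv:2102.01947 — 5 statements merged into one kernel-verified Lean document; each statement's English description precedes it below -/
import Mathlib

section
/- Let μ ⊢ n and λ ⊢ n+1 with λ obtained from μ by adding one box in column k, and let L(λ, μ) denote the number of x ∈ F_q^n extending a fixed nilpotent X of type μ to a nilpotent matrix of type λ (as in the preceding counting result). Let ψ_{λ/μ}(t) := 1 − t^{m_{k−1}(μ)} for k > 1 and ψ_{λ/μ}(t) := 1 for k = 1 be the Hall–Littlewood Pieri coefficient. Then L(λ, μ) = ψ_{λ/μ}(q^{−1}) · q^{n(μ) − n(n−1)/2} / q^{n(λ) − (n+1)n/2}, where n(ν) := Σ_{i ≥ 1} (i−1) ν_i. -/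
open scoped BigOperators

def IsPartitionFun (f : ℕ → ℕ) : Prop := Antitone f ∧ ∃ N, ∀ n, N ≤ n → f n = 0

/-- The `k`-th part `μ'_k = #{i : μ_i ≥ k}` of the conjugate partition (for `k ≥ 1`). -/
noncomputable def conjP (μ : ℕ → ℕ) (k : ℕ) : ℕ := Nat.card {i : ℕ | k ≤ μ i}

/-- `m_j(μ)`, the number of parts of `μ` equal to `j`. -/
noncomputable def mcount (μ : ℕ → ℕ) (j : ℕ) : ℕ := Nat.card {i : ℕ | μ i = j}

/-- The statistic `n(μ) = Σ_{i ≥ 1} (i-1) μ_i` (with 0-based indexing, `Σ_i i * μ i`). -/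
noncomputable def nstat (μ : ℕ → ℕ) : ℕ := ∑ᶠ i, i * μ i

/-! Adding a box in column `k` puts it at the end of row `r = μ'_k` (rows counted from `0`), which
had length `k - 1`; hence `n(λ) = n(μ) + μ'_k`. The rows of length at least `k` are counted both by
`μ'_k` and by `Σ_{j ≥ k} m_j(μ)`. As `(n+1)n/2 = n(n-1)/2 + n`, the quotient of powers on the right
is `q^(n - μ'_k)`, the power of `q` on the left. -/

section FiniteSupport

variable {ι : Type*} {f : ι → ℕ}

lemma card_setOf_le_le_finsum (hf : f.HasFiniteSupport) {k : ℕ} (hk : 1 ≤ k) :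
    Nat.card {i | k ≤ f i} ≤ ∑ᶠ i, f i := by
  have hsub : {i | k ≤ f i} ⊆ f.support := fun i (hi : k ≤ f i) => by
    rw [Function.mem_support]; omega
  rw [Nat.card_coe_set_eq, ← finsum_one, finsum_mem_def]
  refine finsum_le_finsum' (hf.subset (Set.support_indicator_subset.trans hsub)) hf
    fun i => ?_
  by_cases hi : k ≤ f i
  · rw [Set.indicator_of_mem (show i ∈ {i | k ≤ f i} from hi)]; exact hk.trans hi
  · rw [Set.indicator_of_notMem (show i ∉ {i | k ≤ f i} from hi)]; exact Nat.zero_le _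

lemma finsum_card_fiber_eq_card_setOf_le (hf : f.HasFiniteSupport) {k : ℕ} (hk : 1 ≤ k) :
    ∑ᶠ j, (if k ≤ j then Nat.card {i | f i = j} else 0) = Nat.card {i | k ≤ f i} := by
  set A := {i | k ≤ f i}
  have hA : A.Finite := hf.subset fun i (hi : k ≤ f i) => by rw [Function.mem_support]; omega
  have hfiber : ∀ j ∈ f '' A, {i | f i = j} ⊆ A := by
    rintro _ ⟨i', hi', rfl⟩ i (hi : f i = f i')
    exact (hi ▸ hi' : k ≤ f i)
  have hUnion : A = ⋃ j ∈ f '' A, {i | f i = j} := by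
    refine subset_antisymm (fun i hi => ?_) (Set.iUnion₂_subset hfiber)
    exact Set.mem_biUnion (Set.mem_image_of_mem f hi) rfl
  simp only [Nat.card_coe_set_eq]
  rw [hUnion, (hA.image f).ncard_biUnion (fun j hj => hA.subset (hfiber j hj))
    (fun _ _ _ _ hne => Set.disjoint_left.2 fun i hi hi' => hne (hi.symm.trans hi')),
    finsum_mem_def]
  refine finsum_congr fun j => ?_
  by_cases hj : j ∈ f '' A
  · obtain ⟨i, hi, rfl⟩ := hj
    rw [Set.indicator_of_mem (Set.mem_image_of_mem f hi), if_pos (show k ≤ f i from hi)]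
  · rw [Set.indicator_of_notMem hj]
    split_ifs with hkj
    · have : {i | f i = j} = ∅ :=
        Set.eq_empty_of_forall_notMem fun i (hi : f i = j) => hj ⟨i, show k ≤ f i by omega, hi⟩
      rw [this, Set.ncard_empty]
    · rfl

end FiniteSupport

namespace IsPartitionFun

variable {μ : ℕ → ℕ}

lemma hasFiniteSupport (hμ : IsPartitionFun μ) : μ.HasFiniteSupport := by
  obtain ⟨-, N, hN⟩ := hμ
  exact (Set.finite_Iio N).subset fun i hi => by
    by_contra h
    exact hi (hN i (not_lt.1 h))

lemma setOf_le_eq_Iio_conjP (hμ : IsPartitionFun μ) {j : ℕ} (hj : 1 ≤ j) :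
    {i | j ≤ μ i} = Set.Iio (conjP μ j) := by
  obtain ⟨hanti, N, hN⟩ := hμ
  have hlower : IsLowerSet {i | j ≤ μ i} := fun a b hba (ha : j ≤ μ a) => ha.trans (hanti hba)
  obtain huniv | ⟨r, hr⟩ := hlower.eq_univ_or_Iio
  · have hjN : j ≤ μ N := (Set.eq_univ_iff_forall.1 huniv) N
    rw [hN N le_rfl] at hjN
    omega
  · rw [conjP, hr, Nat.card_coe_set_eq, Set.ncard_Iio_nat]

lemma lt_conjP_iff (hμ : IsPartitionFun μ) {i j : ℕ} (hj : 1 ≤ j) :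
    i < conjP μ j ↔ j ≤ μ i := by
  rw [← Set.mem_Iio, ← hμ.setOf_le_eq_Iio_conjP hj, Set.mem_ofPred_eq]

lemma finsum_mcount_eq_conjP (hμ : IsPartitionFun μ) {k : ℕ} (hk : 1 ≤ k) :
    ∑ᶠ j, (if k ≤ j then mcount μ j else 0) = conjP μ k :=
  finsum_card_fiber_eq_card_setOf_le hμ.hasFiniteSupport hk

end IsPartitionFun

def AddsBoxInColumn (μ lam : ℕ → ℕ) (k : ℕ) : Prop :=
  conjP lam k = conjP μ k + 1 ∧ ∀ j, 1 ≤ j → j ≠ k → conjP lam j = conjP μ j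

namespace AddsBoxInColumn

variable {μ lam : ℕ → ℕ} {k : ℕ}

lemma le_apply_iff_of_ne (h : AddsBoxInColumn μ lam k) (hμ : IsPartitionFun μ)
    (hlam : IsPartitionFun lam) {i j : ℕ} (hj : 1 ≤ j) (hjk : j ≠ k) :
    j ≤ lam i ↔ j ≤ μ i := by
  rw [← hlam.lt_conjP_iff hj, ← hμ.lt_conjP_iff hj, h.2 j hj hjk]

lemma le_apply_iff (h : AddsBoxInColumn μ lam k) (hlam : IsPartitionFun lam) (hk : 1 ≤ k)
    {i : ℕ} : k ≤ lam i ↔ i ≤ conjP μ k := by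
  rw [← hlam.lt_conjP_iff hk, h.1, Nat.lt_succ_iff]

lemma apply_conjP_add_one (h : AddsBoxInColumn μ lam k) (hμ : IsPartitionFun μ)
    (hlam : IsPartitionFun lam) (hk : 1 ≤ k) : μ (conjP μ k) + 1 = k := by
  have hlt : μ (conjP μ k) < k :=
    not_le.1 fun hle => lt_irrefl _ ((hμ.lt_conjP_iff hk).2 hle)
  have hk_le : k ≤ lam (conjP μ k) := (h.le_apply_iff hlam hk).2 le_rfl
  rcases eq_or_ne k 1 with rfl | hk1
  · omega
  · have hprev : k - 1 ≤ μ (conjP μ k) :=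
      (h.le_apply_iff_of_ne hμ hlam (by omega) (by omega)).1 (by omega)
    omega

lemma apply_conjP (h : AddsBoxInColumn μ lam k) (hμ : IsPartitionFun μ)
    (hlam : IsPartitionFun lam) (hk : 1 ≤ k) : lam (conjP μ k) = k := by
  have hk_le : k ≤ lam (conjP μ k) := (h.le_apply_iff hlam hk).2 le_rfl
  have hrow := h.apply_conjP_add_one hμ hlam hk
  by_contra hne
  have hbelow := (h.le_apply_iff_of_ne hμ hlam (i := conjP μ k) (j := lam (conjP μ k))
    (by omega) hne).1 le_rfl
  omega

lemma eq_add_single (h : AddsBoxInColumn μ lam k) (hμ : IsPartitionFun μ)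
    (hlam : IsPartitionFun lam) (hk : 1 ≤ k) : lam = μ + Pi.single (conjP μ k) 1 := by
  funext i
  rw [Pi.add_apply, Pi.single_apply]
  split_ifs with hi
  · subst hi
    rw [h.apply_conjP hμ hlam hk, h.apply_conjP_add_one hμ hlam hk]
  · rw [add_zero]
    refine eq_of_forall_le_iff fun j => ?_
    rcases Nat.eq_zero_or_pos j with rfl | hj
    · simp
    rcases eq_or_ne j k with rfl | hjk
    · rw [h.le_apply_iff hlam hk, ← hμ.lt_conjP_iff hk]
      omega
    · exact h.le_apply_iff_of_ne hμ hlam hj hjk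

end AddsBoxInColumn

lemma nstat_add_single {μ : ℕ → ℕ} (hμ : μ.HasFiniteSupport) (r : ℕ) :
    nstat (μ + Pi.single r 1) = nstat μ + r := by
  have h1 : (fun i => i * μ i).HasFiniteSupport := hμ.subset fun i hi => by
    simp_all
  have h2 : (fun i => i * Pi.single (M := fun _ => ℕ) r 1 i).HasFiniteSupport :=
    (Set.finite_singleton r).subset fun i hi => by
      by_contra hir
      simp_all
  rw [nstat, nstat]
  simp only [Pi.add_apply, mul_add]
  rw [finsum_add_distrib h1 h2, finsum_eq_single (fun i => i * Pi.single (M := fun _ => ℕ) r 1 i) r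
    fun i hir => by simp [hir], Pi.single_eq_same, mul_one]

lemma triangle_exponent_sub {N r n : ℕ} (hr : r ≤ n) :
    ((N : ℤ) - (n * (n - 1) / 2 : ℕ)) - (((N + r : ℕ) : ℤ) - ((n + 1) * n / 2 : ℕ)) =
      (n - r : ℕ) := by
  have := Nat.triangle_succ n
  rw [Nat.add_sub_cancel] at this
  omega

theorem stmt4_general (q n k : ℕ) (hq : IsPrimePow q) (hk : 1 ≤ k) (μ lam : ℕ → ℕ)
    (hμ : IsPartitionFun μ) (hlam : IsPartitionFun lam)
    (hμn : ∑ᶠ i, μ i = n)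
    (hboxk : conjP lam k = conjP μ k + 1)
    (hbox : ∀ i, 1 ≤ i → i ≠ k → conjP lam i = conjP μ i) :
    (if k = 1 then (q : ℚ) ^ (n - ∑ᶠ j, (if 1 ≤ j then mcount μ j else 0))
      else (q : ℚ) ^ (n - ∑ᶠ j, (if k ≤ j then mcount μ j else 0)) *
        (1 - (q : ℚ) ^ (-(mcount μ (k - 1) : ℤ))))
    = (if k = 1 then 1 else 1 - ((q : ℚ)⁻¹) ^ (mcount μ (k - 1))) *
        (q : ℚ) ^ ((nstat μ : ℤ) - (n * (n - 1) / 2 : ℕ)) /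
        (q : ℚ) ^ ((nstat lam : ℤ) - ((n + 1) * n / 2 : ℕ)) := by
  have hq0 : (q : ℚ) ≠ 0 := Nat.cast_ne_zero.2 hq.ne_zero
  have hr : conjP μ k ≤ n := hμn ▸ card_setOf_le_le_finsum hμ.hasFiniteSupport hk
  have hnstat : nstat lam = nstat μ + conjP μ k := by
    rw [AddsBoxInColumn.eq_add_single ⟨hboxk, hbox⟩ hμ hlam hk,
      nstat_add_single hμ.hasFiniteSupport]
  have hpow : (q : ℚ) ^ ((nstat μ : ℤ) - (n * (n - 1) / 2 : ℕ)) /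
      (q : ℚ) ^ ((nstat lam : ℤ) - ((n + 1) * n / 2 : ℕ)) = (q : ℚ) ^ (n - conjP μ k) := by
    rw [← zpow_sub₀ hq0, hnstat, triangle_exponent_sub hr, zpow_natCast]
  rcases eq_or_ne k 1 with rfl | hk1
  · rw [if_pos rfl, if_pos rfl, one_mul, hpow, hμ.finsum_mcount_eq_conjP le_rfl]
  · rw [if_neg hk1, if_neg hk1, mul_div_assoc, hpow, hμ.finsum_mcount_eq_conjP hk, zpow_neg,
      zpow_natCast, inv_pow, mul_comm]

/-- Let `λ ⊢ n+1` be obtained from `μ ⊢ n` by adding one box in column `k`, and let `L(λ, μ)`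
be the count `q^(n − Σ_{j≥k} m_j(μ))(1 − q^(−m_{k−1}(μ)))` for `k > 1`, resp.
`q^(n − Σ_{j≥1} m_j(μ))` for `k = 1`.  With the Hall–Littlewood Pieri coefficient
`ψ_{λ/μ}(t) = 1 − t^(m_{k−1}(μ))` for `k > 1` and `ψ_{λ/μ}(t) = 1` for `k = 1`, one has
`L(λ, μ) = ψ_{λ/μ}(q⁻¹) · q^(n(μ) − n(n−1)/2) / q^(n(λ) − (n+1)n/2)`. -/
theorem stmt4 (q n k : ℕ) (hq : IsPrimePow q) (hk : 1 ≤ k) (μ lam : ℕ → ℕ)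
    (hμ : IsPartitionFun μ) (hlam : IsPartitionFun lam)
    (hμn : ∑ᶠ i, μ i = n) (hlamn : ∑ᶠ i, lam i = n + 1)
    (hboxk : conjP lam k = conjP μ k + 1)
    (hbox : ∀ i, 1 ≤ i → i ≠ k → conjP lam i = conjP μ i) :
    (if k = 1 then (q : ℚ) ^ (n - ∑ᶠ j, (if 1 ≤ j then mcount μ j else 0))
      else (q : ℚ) ^ (n - ∑ᶠ j, (if k ≤ j then mcount μ j else 0)) *
        (1 - (q : ℚ) ^ (-(mcount μ (k - 1) : ℤ))))
    = (if k = 1 then 1 else 1 - ((q : ℚ)⁻¹) ^ (mcount μ (k - 1))) *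
        (q : ℚ) ^ ((nstat μ : ℤ) - (n * (n - 1) / 2 : ℕ)) /
        (q : ℚ) ^ ((nstat lam : ℤ) - ((n + 1) * n / 2 : ℕ)) :=
  stmt4_general q n k hq hk μ lam hμ hlam hμn hboxk hbox
end

section
/- Every Radon measure on the locally compact group L(q) of almost strictly upper triangular infinite matrices over F_q that is invariant under conjugation by the infinite symmetric group S(∞) (acting via permutation matrices) and has finite total mass is a nonnegative multiple of the Dirac measure at the zero matrix. -/
/-! Transpositions move the set of matrices with a nonzero `(i, j)` entry onto the corresponding
set for the position `(n + k, n)`, for every large `n` (`k = 0` on the diagonal, `k = 1` off it),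
so these sets all have the same measure. Every matrix has zero entries at `(n + k, n)` once `n`
exceeds its level, so for a finite measure these measures tend to `0`. Hence every entry vanishes
almost everywhere and the measure is concentrated at the zero matrix.
-/

open MeasureTheory

/-- `M` is "upper triangular beyond level `n`": `m_{ij} = 0` whenever `j ≤ i` and `i ≥ n`. -/
def ULT {F : Type*} [Field F] (n : ℕ) (M : ℕ → ℕ → F) : Prop :=
  ∀ i j, j ≤ i → n ≤ i → M i j = 0

/-- The space `𝕃(q)` of almost strictly upper triangular infinite matrices over `F`. -/
def LSpace (F : Type*) [Field F] : Type _ := {M : ℕ → ℕ → F // ∃ n, ULT n M}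

/-- The product topology on infinite matrices, where `F` carries the discrete topology. -/
def piTop (F : Type*) [Field F] : TopologicalSpace (ℕ → ℕ → F) :=
  @Pi.topologicalSpace ℕ (fun _ => ℕ → F) fun _ =>
    @Pi.topologicalSpace ℕ (fun _ => F) fun _ => ⊥

/-- The inductive limit topology on `𝕃(q)`: the finest topology making all the inclusions of
the compact subgroups `𝕃_n(q)` (with their pointwise-convergence topology) continuous. -/
instance instLSpaceTop (F : Type*) [Field F] : TopologicalSpace (LSpace F) :=
  ⨆ n : ℕ, TopologicalSpace.coinduced
    (fun M : {M : ℕ → ℕ → F // ULT n M} => (⟨M.val, n, M.prop⟩ : LSpace F))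
    (TopologicalSpace.induced Subtype.val (piTop F))

instance instLSpaceMeas (F : Type*) [Field F] : MeasurableSpace (LSpace F) := borel (LSpace F)

instance (F : Type*) [Field F] : BorelSpace (LSpace F) := ⟨rfl⟩

/-- The zero matrix, as an element of `𝕃(q)`. -/
def zeroL (F : Type*) [Field F] : LSpace F := ⟨fun _ _ => 0, 0, fun _ _ _ _ => rfl⟩

/-- Conjugation of `M ∈ 𝕃(q)` by the permutation matrix of a finitary permutation `σ`:
`(P_σ M P_σ⁻¹)_{ij} = M_{σ⁻¹ i, σ⁻¹ j}`. -/
def permConj (F : Type*) [Field F] (σ : Equiv.Perm ℕ) (hσ : {i | σ i ≠ i}.Finite)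
    (M : LSpace F) : LSpace F := by
  refine ⟨fun i j => M.val (σ⁻¹ i) (σ⁻¹ j), ?_⟩
  obtain ⟨n, hn⟩ := M.prop
  refine ⟨max n (hσ.toFinset.sup id + 1), fun i j hji hi => ?_⟩
  have hsup : ∀ a : ℕ, σ a ≠ a → a ≤ hσ.toFinset.sup id := fun a ha =>
    Finset.le_sup (f := id) (hσ.mem_toFinset.mpr ha)
  have hii : σ⁻¹ i = i := by
    by_contra h
    have hmem : σ i ≠ i := by
      intro he
      apply h
      have h2 : σ⁻¹ i = σ⁻¹ (σ i) := by rw [he]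
      rw [show σ⁻¹ (σ i) = i from σ.symm_apply_apply i] at h2
      exact h2
    have := hsup i hmem
    omega
  apply hn
  · by_cases h : σ⁻¹ j = j
    · rw [h, hii]; exact hji
    · have hmem : σ (σ⁻¹ j) ≠ σ⁻¹ j := by
        rw [show σ (σ⁻¹ j) = j from σ.apply_symm_apply j]
        exact fun he => h he.symm
      have := hsup _ hmem
      rw [hii]
      omega
  · rw [hii]; omega

open Filter Topology

section MeasureLemmas

variable {α : Type*} [MeasurableSpace α] {μ : Measure α}

lemma measure_preimage_eq_of_map_eq {f : α → α} (hf : μ.map f = μ) {s : Set α}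
    (hs : MeasurableSet s) : μ (f ⁻¹' s) = μ s := by
  by_cases hmeas : AEMeasurable f μ
  · conv_rhs => rw [← hf]
    exact (Measure.map_apply_of_aemeasurable hmeas hs).symm
  · rw [Measure.map_of_not_aemeasurable hmeas] at hf
    simp [← hf]

lemma tendsto_measure_zero_of_eventually_notMem [IsFiniteMeasure μ] {ι : Type*} {L : Filter ι}
    [L.IsCountablyGenerated] {s : ι → Set α} (hs : ∀ i, MeasurableSet (s i))
    (h : ∀ x, ∀ᶠ i in L, x ∉ s i) :
    Tendsto (fun i ↦ μ (s i)) L (𝓝 0) := by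
  simpa using tendsto_measure_of_tendsto_indicator_of_isFiniteMeasure (A := ∅) L μ hs
    (by simpa using h)

lemma eq_smul_dirac_of_measure_compl_singleton {a : α} (h : μ {a}ᶜ = 0) :
    μ = μ {a} • Measure.dirac a := by
  rw [← Measure.restrict_singleton, Measure.restrict_eq_self_of_ae_mem (ae_iff.mpr h)]

end MeasureLemmas

lemma Equiv.finite_setOf_swap_apply_ne {β : Type*} [DecidableEq β] (a b : β) :
    {x | Equiv.swap a b x ≠ x}.Finite :=
  (Set.toFinite {a, b}).subset fun _ hx ↦ (Equiv.swap_apply_ne_self_iff.mp hx).2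

namespace LSpace

variable {F : Type*} [Field F]

def nonzeroAt (i j : ℕ) : Set (LSpace F) := {M | M.val i j ≠ 0}

lemma isOpen_setOf_val_apply_eq (i j : ℕ) (x : F) :
    IsOpen {M : LSpace F | M.val i j = x} := by
  let _ : TopologicalSpace F := ⊥
  have : DiscreteTopology F := ⟨rfl⟩
  refine isOpen_iSup_iff.mpr fun n ↦ isOpen_coinduced.mpr ?_
  refine isOpen_induced_iff.mpr ⟨{f | f i j = x}, ?_, rfl⟩
  have hc : Continuous fun f : ℕ → ℕ → F ↦ f i j :=
    (continuous_apply j).comp (continuous_apply i)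
  exact hc.isOpen_preimage {x} (isOpen_discrete _)

lemma measurableSet_nonzeroAt (i j : ℕ) : MeasurableSet (nonzeroAt i j : Set (LSpace F)) :=
  (isOpen_setOf_val_apply_eq i j 0).measurableSet.compl

lemma preimage_permConj_nonzeroAt (σ : Equiv.Perm ℕ) (hσ : {i | σ i ≠ i}.Finite)
    (i j : ℕ) :
    permConj F σ hσ ⁻¹' nonzeroAt i j = nonzeroAt (σ⁻¹ i) (σ⁻¹ j) :=
  rfl

lemma eventually_notMem_nonzeroAt_add (M : LSpace F) (k : ℕ) :
    ∀ᶠ n in atTop, M ∉ nonzeroAt (n + k) n := by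
  obtain ⟨m, hm⟩ := M.prop
  filter_upwards [eventually_ge_atTop m] with n hn
  simpa [nonzeroAt] using hm (n + k) n (by omega) (by omega)

lemma iUnion_nonzeroAt : ⋃ i, ⋃ j, nonzeroAt i j = ({zeroL F}ᶜ : Set (LSpace F)) := by
  ext M
  simp only [nonzeroAt, Set.mem_iUnion, Set.mem_ofPred_eq, Set.mem_compl_iff,
    Set.mem_singleton_iff]
  constructor
  · rintro ⟨i, j, hij⟩ rfl
    exact hij rfl
  · intro hM
    by_contra! hzero
    exact hM (Subtype.ext (funext₂ hzero))

def IsConjInvariant (μ : Measure (LSpace F)) : Prop :=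
  ∀ (σ : Equiv.Perm ℕ) (hσ : {i | σ i ≠ i}.Finite), μ.map (permConj F σ hσ) = μ

variable {μ : Measure (LSpace F)}

lemma IsConjInvariant.measure_nonzeroAt_swap (hμ : IsConjInvariant μ) (a b i j : ℕ) :
    μ (nonzeroAt (Equiv.swap a b i) (Equiv.swap a b j)) = μ (nonzeroAt i j) := by
  have := measure_preimage_eq_of_map_eq (hμ _ (Equiv.finite_setOf_swap_apply_ne a b))
    (measurableSet_nonzeroAt i j)
  rwa [preimage_permConj_nonzeroAt, Equiv.swap_inv] at this

lemma IsConjInvariant.exists_measure_nonzeroAt_eq (hμ : IsConjInvariant μ) (i j : ℕ) :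
    ∃ k, ∀ n, max i j < n → μ (nonzeroAt (n + k) n) = μ (nonzeroAt i j) := by
  rcases eq_or_ne i j with rfl | hij
  · refine ⟨0, fun n _ ↦ ?_⟩
    simpa using hμ.measure_nonzeroAt_swap i n i i
  · refine ⟨1, fun n hn ↦ ?_⟩
    calc μ (nonzeroAt (n + 1) n)
        = μ (nonzeroAt (Equiv.swap j n (n + 1)) (Equiv.swap j n j)) := by
          rw [Equiv.swap_apply_left, Equiv.swap_apply_of_ne_of_ne (by omega) (by omega)]
      _ = μ (nonzeroAt (n + 1) j) := hμ.measure_nonzeroAt_swap j n (n + 1) j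
      _ = μ (nonzeroAt (Equiv.swap i (n + 1) i) (Equiv.swap i (n + 1) j)) := by
          rw [Equiv.swap_apply_left, Equiv.swap_apply_of_ne_of_ne hij.symm (by omega)]
      _ = μ (nonzeroAt i j) := hμ.measure_nonzeroAt_swap i (n + 1) i j

lemma IsConjInvariant.measure_nonzeroAt [IsFiniteMeasure μ] (hμ : IsConjInvariant μ)
    (i j : ℕ) : μ (nonzeroAt i j) = 0 := by
  obtain ⟨k, hk⟩ := hμ.exists_measure_nonzeroAt_eq i j
  have hlim : Tendsto (fun n ↦ μ (nonzeroAt (n + k) n)) atTop (𝓝 0) :=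
    tendsto_measure_zero_of_eventually_notMem (fun _ ↦ measurableSet_nonzeroAt _ _)
      fun M ↦ eventually_notMem_nonzeroAt_add M k
  refine tendsto_nhds_unique (tendsto_const_nhds.congr' ?_) hlim
  filter_upwards [eventually_gt_atTop (max i j)] with n hn
  exact (hk n hn).symm

lemma IsConjInvariant.measure_compl_zeroL [IsFiniteMeasure μ] (hμ : IsConjInvariant μ) :
    μ {zeroL F}ᶜ = 0 := by
  rw [← iUnion_nonzeroAt]
  exact measure_iUnion_null fun i ↦ measure_iUnion_null fun j ↦ hμ.measure_nonzeroAt i j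

end LSpace

theorem stmt6_general {F : Type*} [Field F]
    (μ : Measure (LSpace F)) [IsFiniteMeasure μ]
    (hinv : ∀ (σ : Equiv.Perm ℕ) (hσ : {i | σ i ≠ i}.Finite),
      Measure.map (permConj F σ hσ) μ = μ) :
    ∃ c : NNReal, μ = c • Measure.dirac (zeroL F) := by
  refine ⟨(μ {zeroL F}).toNNReal, ?_⟩
  rw [ENNReal.smul_def, ENNReal.coe_toNNReal (measure_ne_top μ _)]
  exact eq_smul_dirac_of_measure_compl_singleton (LSpace.IsConjInvariant.measure_compl_zeroL hinv)

/-- Every `S(∞)`-invariant finite Borel (Radon) measure on the space `𝕃(q)` of almost strictly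
upper triangular matrices over a finite field is a nonnegative multiple of the Dirac measure
at the zero matrix. -/
theorem stmt6 {F : Type*} [Field F] [Fintype F]
    (μ : Measure (LSpace F)) [IsFiniteMeasure μ]
    (hinv : ∀ (σ : Equiv.Perm ℕ) (hσ : {i | σ i ≠ i}.Finite),
      Measure.map (permConj F σ hσ) μ = μ) :
    ∃ c : NNReal, μ = c • Measure.dirac (zeroL F) :=
  stmt6_general μ hinv
end

section
/- Any Radon measure on L(q) that is invariant under conjugation by the group GL(∞, q) of finitary invertible matrices is automatically invariant under conjugation by the larger group GLB of invertible infinite matrices over F_q with finitely many nonzero entries below the diagonal. -/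
open MeasureTheory
open scoped BigOperators

/-- Product of two infinite matrices (each column of `B` is required to have finite support for
this to be the actual matrix product; `∑ᶠ` returns `0` on infinite supports). -/
noncomputable def matMul {F : Type*} [Field F] (A B : ℕ → ℕ → F) : ℕ → ℕ → F :=
  fun i j => ∑ᶠ k, A i k * B k j

/-- The identity infinite matrix. -/
def idMat (F : Type*) [Field F] : ℕ → ℕ → F := fun i j => if i = j then 1 else 0

/-- The group `𝔾𝕃𝔹` of invertible infinite matrices over `F` having only finitely many nonzero
entries below the diagonal (an element is recorded together with its inverse). -/
structure GLBs (F : Type*) [Field F] where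
  g : ℕ → ℕ → F
  ginv : ℕ → ℕ → F
  hg : {p : ℕ × ℕ | p.2 < p.1 ∧ g p.1 p.2 ≠ 0}.Finite
  hginv : {p : ℕ × ℕ | p.2 < p.1 ∧ ginv p.1 p.2 ≠ 0}.Finite
  hmul : matMul g ginv = idMat F
  hinvmul : matMul ginv g = idMat F

/-- `G` lies in the subgroup `GL(∞, q) ⊂ 𝔾𝕃𝔹` of finitary matrices: it differs from the
identity matrix in only finitely many entries. -/
def Finitary {F : Type*} [Field F] (G : GLBs F) : Prop :=
  {p : ℕ × ℕ | G.g p.1 p.2 ≠ idMat F p.1 p.2}.Finite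

/-- Conjugation `M ↦ g M g⁻¹` of `𝕃(q)` by an element of `𝔾𝕃𝔹`. -/
noncomputable def conjGLB {F : Type*} [Field F] (G : GLBs F) (M : LSpace F) : LSpace F :=
  ⟨matMul (matMul G.g M.val) G.ginv, by
    obtain ⟨n, hn⟩ := M.prop
    set bg := (G.hg.toFinset.sup fun p : ℕ × ℕ => p.1) + 1 with hbg
    set bh := (G.hginv.toFinset.sup fun p : ℕ × ℕ => p.1) + 1 with hbh
    have hgz : ∀ i k, bg ≤ i → k < i → G.g i k = 0 := by
      intro i k hi hk
      by_contra h
      have hmem : ((i, k) : ℕ × ℕ) ∈ G.hg.toFinset := G.hg.mem_toFinset.mpr ⟨hk, h⟩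
      have h2 : i ≤ G.hg.toFinset.sup fun p : ℕ × ℕ => p.1 :=
        Finset.le_sup (f := fun p : ℕ × ℕ => p.1) hmem
      omega
    have hhz : ∀ l j, bh ≤ l → j < l → G.ginv l j = 0 := by
      intro l j hl hj
      by_contra h
      have hmem : ((l, j) : ℕ × ℕ) ∈ G.hginv.toFinset := G.hginv.mem_toFinset.mpr ⟨hj, h⟩
      have h2 : l ≤ G.hginv.toFinset.sup fun p : ℕ × ℕ => p.1 :=
        Finset.le_sup (f := fun p : ℕ × ℕ => p.1) hmem
      omega
    refine ⟨max (max n bg) bh, fun i j hji hi => ?_⟩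
    have hA : ∀ l, l ≤ i → matMul G.g M.val i l = 0 := by
      intro l hl
      have h' : ∀ k, G.g i k * M.val k l = 0 := by
        intro k
        by_cases hk : k < i
        · rw [hgz i k (by omega) hk, zero_mul]
        · rw [hn k l (by omega) (by omega), mul_zero]
      exact finsum_eq_zero_of_forall_eq_zero h'
    have h'' : ∀ l, matMul G.g M.val i l * G.ginv l j = 0 := by
      intro l
      by_cases hl : l ≤ i
      · rw [hA l hl, zero_mul]
      · rw [hhz l j (by omega) (by omega), mul_zero]
    exact finsum_eq_zero_of_forall_eq_zero h''⟩

/-!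
Let `L_n` be the compact open set of matrices vanishing on and below the diagonal from row `n`
on, so that `𝕃(q) = ⋃ L_n`. A measure finite on every `L_n` is determined by its values on the
π-system of sets `L_n ∩ {M | the m × m corner of M lies in W}`.

Let `g ∈ 𝔾𝕃𝔹` be upper triangular from row `b` on, and `h ∈ GL(∞, q)` its truncation to a large
`m × m` corner. For `M ∈ L_p` with `p ≤ m`, the matrices `g M g⁻¹` and `h M h⁻¹` have the same
`m × m` corner and both lie in `L_(max p b)`, so they lie in the same sets of the π-system.
Hence `μ(g⁻¹ · S ∩ L_p) = μ(h⁻¹ · S ∩ L_p) = μ(S ∩ h · L_p)` by invariance under `h`. This is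
at most `μ S` and at least `μ (S ∩ L_a)` when `p = max a b`; letting `p → ∞` gives
`μ(g⁻¹ · S) = μ S`.
-/

open Set Topology

theorem finsum_eq_sum_range_of_eq_zero {M : Type*} [AddCommMonoid M] {f : ℕ → M} {m : ℕ}
    (h : ∀ k, m ≤ k → f k = 0) : ∑ᶠ k, f k = ∑ k ∈ Finset.range m, f k :=
  finsum_eq_sum_of_support_subset _ fun k hk => by
    by_contra hkm
    exact hk (h k (by simpa using hkm))

section Zero

variable {α : Type*} [Zero α]

def UpperFrom (b : ℕ) (A : ℕ → ℕ → α) : Prop :=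
  ∀ i j, b ≤ i → j < i → A i j = 0

theorem UpperFrom.mono {b b' : ℕ} {A : ℕ → ℕ → α} (h : UpperFrom b A) (hb : b ≤ b') :
    UpperFrom b' A :=
  fun i j hi => h i j (hb.trans hi)

theorem exists_upperFrom_of_finite {A : ℕ → ℕ → α}
    (h : {p : ℕ × ℕ | p.2 < p.1 ∧ A p.1 p.2 ≠ 0}.Finite) : ∃ b, UpperFrom b A := by
  obtain ⟨b, hb⟩ := (h.image Prod.fst).bddAbove
  refine ⟨b + 1, fun i j hi hj => ?_⟩
  by_contra hne
  have := hb ⟨(i, j), ⟨hj, hne⟩, rfl⟩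
  omega

def ColumnFinite (A : ℕ → ℕ → α) : Prop :=
  ∀ j, {i | A i j ≠ 0}.Finite

theorem UpperFrom.columnFinite {b : ℕ} {A : ℕ → ℕ → α} (h : UpperFrom b A) :
    ColumnFinite A := fun j =>
  (finite_Iio (max b (j + 1))).subset fun i hi => by
    by_contra hle
    simp only [mem_Iio, not_lt, max_le_iff] at hle
    exact hi (h i j hle.1 (by omega))

end Zero

section Field

variable {F : Type*} [Field F]

theorem ULT.upperFrom {n : ℕ} {A : ℕ → ℕ → F} (h : ULT n A) : UpperFrom n A :=
  fun i j hi hj => h i j hj.le hi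

theorem ColumnFinite.matMul {A B : ℕ → ℕ → F} (hA : ColumnFinite A) (hB : ColumnFinite B) :
    ColumnFinite (matMul A B) := fun j =>
  ((hB j).biUnion fun k _ => hA k).subset fun i hi => by
    obtain ⟨k, hk⟩ : ∃ k, A i k * B k j ≠ 0 := by
      by_contra! h0
      exact hi (finsum_eq_zero_of_forall_eq_zero h0)
    exact mem_biUnion (right_ne_zero_of_mul hk) (left_ne_zero_of_mul hk)

theorem matMul_idMat (A : ℕ → ℕ → F) : matMul A (idMat F) = A := by
  funext i j
  rw [matMul, finsum_eq_single _ j fun k hk => by simp [idMat, hk]]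
  simp [idMat]

theorem idMat_matMul (A : ℕ → ℕ → F) : matMul (idMat F) A = A := by
  funext i j
  rw [matMul, finsum_eq_single _ i fun k hk => by simp [idMat, Ne.symm hk]]
  simp [idMat]

theorem matMul_assoc {A B C : ℕ → ℕ → F} (hB : ColumnFinite B) (hC : ColumnFinite C) :
    matMul (matMul A B) C = matMul A (matMul B C) := by
  funext i j
  set K := (hC j).toFinset
  have hK : ∀ f : ℕ → F, ∑ᶠ k, f k * C k j = ∑ k ∈ K, f k * C k j := fun f =>
    finsum_eq_sum_of_support_subset _ fun k hk => by
      simpa [K] using right_ne_zero_of_mul hk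
  calc matMul (matMul A B) C i j
      = ∑ k ∈ K, ∑ᶠ l, A i l * B l k * C k j := by
        rw [matMul, hK]
        simp only [matMul, finsum_mul]
    _ = ∑ᶠ l, ∑ k ∈ K, A i l * B l k * C k j :=
        (sum_finsum_comm _ _ fun k _ => ((hB k).subset fun l hl =>
          right_ne_zero_of_mul (left_ne_zero_of_mul hl)))
    _ = matMul A (matMul B C) i j := by
        simp only [matMul, hK, Finset.mul_sum, mul_assoc]

end Field

section Corner

variable {α : Type*}

def corner (m : ℕ) (A : ℕ → ℕ → α) : Fin m → Fin m → α :=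
  fun i j => A i j

def restrictCorner {k m : ℕ} (h : k ≤ m) (f : Fin m → Fin m → α) : Fin k → Fin k → α :=
  fun i j => f (Fin.castLE h i) (Fin.castLE h j)

theorem restrictCorner_corner {k m : ℕ} (h : k ≤ m) (A : ℕ → ℕ → α) :
    restrictCorner h (corner m A) = corner k A :=
  rfl

theorem corner_eq_of_le {k m : ℕ} {A B : ℕ → ℕ → α} (hkm : k ≤ m)
    (h : corner m A = corner m B) : corner k A = corner k B := by
  rw [← restrictCorner_corner hkm, h, restrictCorner_corner]

end Corner

section Truncation

variable {F : Type*} [Field F]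

def trunc (A : ℕ → ℕ → F) (m : ℕ) : ℕ → ℕ → F :=
  fun i j => if i < m ∧ j < m then A i j else idMat F i j

theorem trunc_of_lt {A : ℕ → ℕ → F} {m i j : ℕ} (hi : i < m) (hj : j < m) :
    trunc A m i j = A i j :=
  if_pos ⟨hi, hj⟩

theorem UpperFrom.trunc {b : ℕ} {A : ℕ → ℕ → F} (h : UpperFrom b A) (m : ℕ) :
    UpperFrom b (trunc A m) := by
  intro i j hi hj
  unfold _root_.trunc idMat
  split_ifs with hc heq
  exacts [h i j hi hj, absurd heq hj.ne', rfl]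

theorem finite_setOf_trunc_ne_idMat (A : ℕ → ℕ → F) (m : ℕ) :
    {p : ℕ × ℕ | trunc A m p.1 p.2 ≠ idMat F p.1 p.2}.Finite :=
  ((finite_Iio m).prod (finite_Iio m)).subset fun _ hp => by
    by_contra hc
    exact hp (if_neg hc)

theorem finite_setOf_trunc_lower (A : ℕ → ℕ → F) (m : ℕ) :
    {p : ℕ × ℕ | p.2 < p.1 ∧ trunc A m p.1 p.2 ≠ 0}.Finite :=
  (finite_setOf_trunc_ne_idMat A m).subset fun _ ⟨hlt, hne⟩ => by
    simpa [idMat, hlt.ne'] using hne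

theorem matMul_trunc_trunc {A B : ℕ → ℕ → F} {b m : ℕ} (hAB : matMul A B = idMat F)
    (hB : UpperFrom b B) (hm : b ≤ m) : matMul (trunc A m) (trunc B m) = idMat F := by
  funext i j
  by_cases hij : i < m ∧ j < m
  · obtain ⟨hi, hj⟩ := hij
    calc matMul (trunc A m) (trunc B m) i j = ∑ k ∈ Finset.range m, A i k * B k j := by
          rw [matMul, finsum_eq_sum_range_of_eq_zero (m := m) fun k hk => by
            rw [trunc, if_neg (by omega), idMat, if_neg (by omega), zero_mul]]
          exact Finset.sum_congr rfl fun k hk => by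
            rw [trunc_of_lt hi (Finset.mem_range.mp hk), trunc_of_lt (Finset.mem_range.mp hk) hj]
      _ = matMul A B i j := (finsum_eq_sum_range_of_eq_zero (m := m) fun k hk => by
            rw [hB k j (hm.trans hk) (by omega), mul_zero]).symm
      _ = idMat F i j := by rw [hAB]
  · rcases not_and_or.mp hij with hi | hj
    · have hrow : ∀ k, trunc A m i k = idMat F i k := fun k => if_neg (by omega)
      calc matMul (trunc A m) (trunc B m) i j = matMul (idMat F) (trunc B m) i j := by
            simp only [matMul, hrow]
        _ = idMat F i j := by rw [idMat_matMul]; exact if_neg (by omega)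
    · have hcol : ∀ k, trunc B m k j = idMat F k j := fun k => if_neg (by omega)
      calc matMul (trunc A m) (trunc B m) i j = matMul (trunc A m) (idMat F) i j := by
            simp only [matMul, hcol]
        _ = idMat F i j := by rw [matMul_idMat]; exact if_neg (by omega)

namespace GLBs

theorem exists_upperFrom (G : GLBs F) : ∃ b, UpperFrom b G.g ∧ UpperFrom b G.ginv := by
  obtain ⟨b, hb⟩ := exists_upperFrom_of_finite G.hg
  obtain ⟨b', hb'⟩ := exists_upperFrom_of_finite G.hginv
  exact ⟨max b b', hb.mono (le_max_left _ _), hb'.mono (le_max_right _ _)⟩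

def inv (G : GLBs F) : GLBs F :=
  ⟨G.ginv, G.g, G.hginv, G.hg, G.hinvmul, G.hmul⟩

def trunc (G : GLBs F) {b m : ℕ} (hg : UpperFrom b G.g) (hginv : UpperFrom b G.ginv)
    (hm : b ≤ m) : GLBs F where
  g := _root_.trunc G.g m
  ginv := _root_.trunc G.ginv m
  hg := finite_setOf_trunc_lower G.g m
  hginv := finite_setOf_trunc_lower G.ginv m
  hmul := matMul_trunc_trunc G.hmul hginv hm
  hinvmul := matMul_trunc_trunc G.hinvmul hg hm

theorem finitary_trunc (G : GLBs F) {b m : ℕ} (hg : UpperFrom b G.g)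
    (hginv : UpperFrom b G.ginv) (hm : b ≤ m) : Finitary (G.trunc hg hginv hm) :=
  finite_setOf_trunc_ne_idMat G.g m

end GLBs

end Truncation

namespace LSpace

variable {F : Type*} [Field F]

def level (F : Type*) [Field F] (n : ℕ) : Set (LSpace F) :=
  {M | ULT n M.val}

theorem level_mono {a b : ℕ} (h : a ≤ b) : level F a ⊆ level F b :=
  fun _ hM i j hji hi => hM i j hji (h.trans hi)

theorem iUnion_level : ⋃ n, level F n = univ :=
  eq_univ_of_forall fun M => mem_iUnion.mpr M.prop

theorem level_inter_level (a b : ℕ) : level F a ∩ level F b = level F (min a b) := by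
  ext M
  simp only [level, ULT, mem_inter_iff, mem_ofPred_eq, min_le_iff, or_imp, forall_and]

theorem mem_level_of_corner_eq {X Y : LSpace F} {n r m : ℕ} (hX : X ∈ level F n)
    (hY : Y ∈ level F r) (hrm : r ≤ m) (h : corner m X.val = corner m Y.val) :
    Y ∈ level F n := by
  intro i j hji hi
  by_cases him : i < m
  · have hXY : X.val i j = Y.val i j := congrFun (congrFun h ⟨i, him⟩) ⟨j, by omega⟩
    exact hXY ▸ hX i j hji hi
  · exact hY i j hji (by omega)

def incl (n : ℕ) : {A : ℕ → ℕ → F // ULT n A} → LSpace F :=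
  fun A => ⟨A.val, n, A.prop⟩

theorem continuous_incl (n : ℕ) :
    Continuous[TopologicalSpace.induced Subtype.val (piTop F), instLSpaceTop F] (incl n) :=
  continuous_iff_coinduced_le.mpr (le_iSup_of_le n le_rfl)

theorem isOpen_iff_forall_isOpen_preimage_incl {U : Set (LSpace F)} :
    IsOpen U ↔ ∀ n, IsOpen[TopologicalSpace.induced Subtype.val (piTop F)] (incl n ⁻¹' U) :=
  isOpen_iSup_iff

theorem continuous_of_forall_continuous_comp_incl {Z : Type*} [TopologicalSpace Z]
    {f : LSpace F → Z}
    (h : ∀ n, Continuous[TopologicalSpace.induced Subtype.val (piTop F), _] (f ∘ incl n)) :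
    Continuous f :=
  continuous_iSup_dom.mpr fun n => continuous_coinduced_dom.mpr (h n)

theorem isOpen_preimage_val {V : Set (ℕ → ℕ → F)} (hV : IsOpen[piTop F] V) :
    IsOpen ((fun M : LSpace F => M.val) ⁻¹' V) :=
  isOpen_iff_forall_isOpen_preimage_incl.mpr fun _ =>
    isOpen_induced_iff (t := piTop F) |>.mpr ⟨V, hV, rfl⟩

theorem isOpen_setOf_corner_mem (m : ℕ) (W : Set (Fin m → Fin m → F)) :
    IsOpen[piTop F] {A | corner m A ∈ W} := by
  let _ : TopologicalSpace F := ⊥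
  have : DiscreteTopology F := ⟨rfl⟩
  exact (isOpen_discrete W).preimage (continuous_pi fun i => continuous_pi fun j =>
    (continuous_apply _).comp (continuous_apply _))

theorem isOpen_level (n : ℕ) : IsOpen (level F n) := by
  refine isOpen_iff_forall_isOpen_preimage_incl.mpr fun p =>
    isOpen_induced_iff (t := piTop F) |>.mpr
      ⟨{A | corner p A ∈ {f | ∀ i j : Fin p, j ≤ i → n ≤ (i : ℕ) → f i j = 0}},
        isOpen_setOf_corner_mem _ _, ?_⟩
  ext A
  refine ⟨fun h i j hji hi => ?_, fun h i j hji hi => h i j hji hi⟩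
  by_cases hip : i < p
  · exact h ⟨i, hip⟩ ⟨j, by omega⟩ hji hi
  · exact A.prop i j hji (by omega)

theorem isCompact_level [Finite F] (n : ℕ) : IsCompact (level F n) := by
  let _ : TopologicalSpace F := ⊥
  have : DiscreteTopology F := ⟨rfl⟩
  have hclosed : IsClosed {A : ℕ → ℕ → F | ULT n A} := by
    simp only [ULT, ofPred_forall]
    exact isClosed_iInter fun i => isClosed_iInter fun j => isClosed_iInter fun _ =>
      isClosed_iInter fun _ => isClosed_eq (by fun_prop) continuous_const
  have : CompactSpace {A : ℕ → ℕ → F // ULT n A} :=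
    isCompact_iff_compactSpace.mp hclosed.isCompact
  have hrange : level F n = range (incl n) :=
    Subset.antisymm (fun M hM => ⟨⟨M.val, hM⟩, rfl⟩) (range_subset_iff.mpr fun A => A.prop)
  exact hrange ▸ @isCompact_range _ _ _ _ this _ (continuous_incl n)

end LSpace

section Conjugation

open LSpace

variable {F : Type*} [Field F]

theorem mapsTo_conjGLB_level {G : GLBs F} {b : ℕ} (hg : UpperFrom b G.g)
    (hginv : UpperFrom b G.ginv) (p : ℕ) :
    MapsTo (conjGLB G) (level F p) (level F (max p b)) := by
  intro M hM i j hji hi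
  have hpi : p ≤ i := le_of_max_le_left hi
  have hbi : b ≤ i := le_of_max_le_right hi
  have hrow : ∀ l ≤ i, matMul G.g M.val i l = 0 := fun l hl =>
    finsum_eq_zero_of_forall_eq_zero fun k => by
      rcases lt_or_ge k i with hk | hk
      · rw [hg i k hbi hk, zero_mul]
      · rw [hM k l (hl.trans hk) (hpi.trans hk), mul_zero]
  exact finsum_eq_zero_of_forall_eq_zero fun l => by
    rcases le_or_gt l i with hl | hl
    · rw [hrow l hl, zero_mul]
    · rw [hginv l j (hbi.trans hl.le) (hji.trans_lt hl), mul_zero]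

theorem conjGLB_inv_conjGLB (G : GLBs F) (M : LSpace F) : conjGLB G.inv (conjGLB G M) = M := by
  obtain ⟨b, hg, hginv⟩ := G.exists_upperFrom
  obtain ⟨n, hM⟩ := M.prop
  have cg := hg.columnFinite
  have cginv := hginv.columnFinite
  have cM := hM.upperFrom.columnFinite
  apply Subtype.ext
  change matMul (matMul G.ginv (matMul (matMul G.g M.val) G.ginv)) G.g = M.val
  rw [← matMul_assoc (cg.matMul cM) cginv, ← matMul_assoc cg cM, G.hinvmul, idMat_matMul,
    matMul_assoc cginv cg, G.hinvmul, matMul_idMat]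

theorem conjGLB_val_eq_sum {G : GLBs F} {b p m : ℕ} (hginv : UpperFrom b G.ginv)
    {M : LSpace F} (hM : M ∈ level F p) (hpm : p ≤ m) (hbm : b ≤ m) (i : ℕ) {j : ℕ}
    (hj : j < m) :
    (conjGLB G M).val i j
      = ∑ l ∈ Finset.range m, (∑ k ∈ Finset.range m, G.g i k * M.val k l) * G.ginv l j := by
  change ∑ᶠ l, (∑ᶠ k, G.g i k * M.val k l) * G.ginv l j = _
  rw [finsum_eq_sum_range_of_eq_zero (m := m) fun l hl => by
    rw [hginv l j (hbm.trans hl) (by omega), mul_zero]]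
  refine Finset.sum_congr rfl fun l hl => ?_
  rw [finsum_eq_sum_range_of_eq_zero (m := m) fun k hk => by
    rw [hM k l (by have := Finset.mem_range.mp hl; omega) (hpm.trans hk), mul_zero]]

theorem corner_conjGLB_trunc {G : GLBs F} {b p m : ℕ} (hg : UpperFrom b G.g)
    (hginv : UpperFrom b G.ginv) (hm : b ≤ m) {M : LSpace F} (hM : M ∈ level F p)
    (hpm : p ≤ m) :
    corner m (conjGLB (G.trunc hg hginv hm) M).val = corner m (conjGLB G M).val := by
  funext i j
  simp only [corner]
  rw [conjGLB_val_eq_sum (hginv.trunc m) hM hpm hm _ j.2,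
    conjGLB_val_eq_sum hginv hM hpm hm _ j.2]
  refine Finset.sum_congr rfl fun l hl => ?_
  change (∑ k ∈ Finset.range m, trunc G.g m i k * M.val k l) * trunc G.ginv m l j = _
  rw [trunc_of_lt (Finset.mem_range.mp hl) j.2]
  congr 1
  exact Finset.sum_congr rfl fun k hk => by rw [trunc_of_lt i.2 (Finset.mem_range.mp hk)]

theorem continuous_conjGLB (G : GLBs F) : Continuous (conjGLB G) := by
  obtain ⟨b, hg, hginv⟩ := G.exists_upperFrom
  refine continuous_of_forall_continuous_comp_incl fun p => ?_
  let _ : TopologicalSpace F := ⊥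
  have : DiscreteTopology F := ⟨rfl⟩
  let φ : {A // ULT p A} → {A // ULT (max p b) A} := fun A =>
    ⟨(conjGLB G (incl p A)).val, mapsTo_conjGLB_level hg hginv p A.prop⟩
  have hφ : Continuous φ := by
    refine continuous_induced_rng.mpr (continuous_pi fun i => continuous_pi fun j => ?_)
    set m := max (j + 1) (max p b)
    have hsum : (fun A : {A // ULT p A} => (φ A).val i j) = fun A =>
        ∑ l ∈ Finset.range m, (∑ k ∈ Finset.range m, G.g i k * A.val k l) * G.ginv l j :=
      funext fun A => conjGLB_val_eq_sum hginv A.prop (by omega) (by omega) i (by omega)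
    simp only [Function.comp_def, hsum]
    have hentry : ∀ k l, Continuous fun A : {A : ℕ → ℕ → F // ULT p A} => A.val k l :=
      fun k l => (continuous_apply l).comp ((continuous_apply k).comp continuous_subtype_val)
    exact continuous_finsetSum _ fun l _ =>
      (continuous_finsetSum _ fun k _ => continuous_const.mul (hentry k l)).mul continuous_const
  exact (continuous_incl _).comp hφ

end Conjugation

namespace LSpace

variable {F : Type*} [Field F]

def cylinders (F : Type*) [Field F] : Set (Set (LSpace F)) :=
  {s | ∃ (n m : ℕ) (W : Set (Fin m → Fin m → F)),
    s = level F n ∩ (fun M : LSpace F => corner m M.val) ⁻¹' W}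

theorem level_mem_cylinders (n : ℕ) : level F n ∈ cylinders F :=
  ⟨n, 0, univ, by rw [preimage_univ, inter_univ]⟩

theorem isOpen_of_mem_cylinders {s : Set (LSpace F)} (hs : s ∈ cylinders F) : IsOpen s := by
  obtain ⟨n, m, W, rfl⟩ := hs
  exact (isOpen_level n).inter (isOpen_preimage_val (isOpen_setOf_corner_mem m W))

theorem isPiSystem_cylinders : IsPiSystem (cylinders F) := by
  rintro _ ⟨n, m, W, rfl⟩ _ ⟨n', m', W', rfl⟩ -
  refine ⟨min n n', max m m', restrictCorner (le_max_left m m') ⁻¹' W ∩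
    restrictCorner (le_max_right m m') ⁻¹' W', ?_⟩
  rw [← level_inter_level]
  ext M
  exact ⟨fun ⟨⟨hn, hW⟩, hn', hW'⟩ => ⟨⟨hn, hn'⟩, hW, hW'⟩,
    fun ⟨⟨hn, hn'⟩, hW, hW'⟩ => ⟨⟨hn, hW⟩, hn', hW'⟩⟩

theorem measurable_val_apply [Finite F] (i j : ℕ) :
    Measurable[MeasurableSpace.generateFrom (cylinders F), ⊤] fun M : LSpace F => M.val i j := by
  refine @measurable_to_countable' F (LSpace F) ⊤ _ (MeasurableSpace.generateFrom _) _ fun x => ?_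
  have hpre : (fun M : LSpace F => M.val i j) ⁻¹' {x} =
      (fun M : LSpace F => corner (max i j + 1) M.val) ⁻¹'
        {f | f ⟨i, by omega⟩ ⟨j, by omega⟩ = x} := rfl
  rw [hpre, ← univ_inter (_ ⁻¹' _), ← iUnion_level, iUnion_inter]
  exact .iUnion fun n => MeasurableSpace.measurableSet_generateFrom ⟨n, _, _, rfl⟩

theorem exists_isOpen_level_inter_eq {U : Set (LSpace F)} (hU : IsOpen U) (n : ℕ) :
    ∃ V, IsOpen[piTop F] V ∧ level F n ∩ U = level F n ∩ (fun M : LSpace F => M.val) ⁻¹' V := by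
  obtain ⟨V, hV, hVU⟩ := isOpen_induced_iff (t := piTop F) |>.mp
    (isOpen_iff_forall_isOpen_preimage_incl.mp hU n)
  refine ⟨V, hV, ?_⟩
  ext M
  exact and_congr_right fun hM => (congrArg (⟨M.val, hM⟩ ∈ ·) hVU).to_iff.symm

theorem borel_eq_generateFrom_cylinders [Finite F] :
    instLSpaceMeas F = MeasurableSpace.generateFrom (cylinders F) := by
  refine le_antisymm (MeasurableSpace.generateFrom_le fun U hU => ?_)
    (MeasurableSpace.generateFrom_le fun s hs => (isOpen_of_mem_cylinders hs).measurableSet)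
  let _ : TopologicalSpace F := ⊥
  have : DiscreteTopology F := ⟨rfl⟩
  let _ : MeasurableSpace F := ⊤
  have : OpensMeasurableSpace F := ⟨le_top⟩
  have hval : Measurable[MeasurableSpace.generateFrom (cylinders F), _]
      fun M : LSpace F => M.val := by
    let _ : MeasurableSpace (LSpace F) := MeasurableSpace.generateFrom (cylinders F)
    exact measurable_pi_lambda _ fun i => measurable_pi_lambda _ fun j => measurable_val_apply i j
  rw [← univ_inter U, ← iUnion_level, iUnion_inter]
  refine .iUnion fun n => ?_
  obtain ⟨V, hV, hUV⟩ := exists_isOpen_level_inter_eq hU n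
  have hV' : IsOpen V := hV
  rw [hUV]
  exact (MeasurableSpace.measurableSet_generateFrom (level_mem_cylinders n)).inter
    (hval hV'.measurableSet)

end LSpace

section Invariance

open LSpace

variable {F : Type*} [Field F]

theorem preimage_conjGLB_inter_level_eq_trunc {G : GLBs F} {b : ℕ} (hg : UpperFrom b G.g)
    (hginv : UpperFrom b G.ginv) {S : Set (LSpace F)} (hS : S ∈ cylinders F) (p : ℕ) :
    ∃ (m : ℕ) (hm : b ≤ m),
      conjGLB G ⁻¹' S ∩ level F p = conjGLB (G.trunc hg hginv hm) ⁻¹' S ∩ level F p := by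
  obtain ⟨n, k, W, rfl⟩ := hS
  set m := max (max p b) k
  have hbm : b ≤ m := (le_max_right p b).trans (le_max_left _ k)
  refine ⟨m, hbm, ?_⟩
  ext M
  simp only [mem_inter_iff, mem_preimage]
  refine and_congr_left fun hM => ?_
  have hcorner := corner_conjGLB_trunc hg hginv hbm hM ((le_max_left p b).trans (le_max_left _ k))
  have hG := mapsTo_conjGLB_level hg hginv p hM
  have hH := mapsTo_conjGLB_level (G := G.trunc hg hginv hbm) (hg.trunc m) (hginv.trunc m) p hM
  have hk := corner_eq_of_le (le_max_right _ k) hcorner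
  exact ⟨fun ⟨hn, hW⟩ =>
      ⟨mem_level_of_corner_eq hn hH (le_max_left _ k) hcorner.symm, hk ▸ hW⟩,
    fun ⟨hn, hW⟩ => ⟨mem_level_of_corner_eq hn hG (le_max_left _ k) hcorner, hk ▸ hW⟩⟩

theorem measure_preimage_conjGLB_inter_level {μ : Measure (LSpace F)} {H : GLBs F}
    (hH : Measure.map (conjGLB H) μ = μ) {S : Set (LSpace F)} (hS : MeasurableSet S) (p : ℕ) :
    μ (conjGLB H ⁻¹' S ∩ level F p) = μ (S ∩ conjGLB H.inv ⁻¹' level F p) := by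
  have hpre :
      conjGLB H ⁻¹' S ∩ level F p = conjGLB H ⁻¹' (S ∩ conjGLB H.inv ⁻¹' level F p) := by
    ext M
    simp only [mem_inter_iff, mem_preimage, conjGLB_inv_conjGLB]
  rw [hpre, ← Measure.map_apply (continuous_conjGLB H).measurable
    (hS.inter ((isOpen_level p).measurableSet.preimage (continuous_conjGLB _).measurable)), hH]

theorem measure_eq_iSup_inter_level (μ : Measure (LSpace F)) (s : Set (LSpace F)) :
    μ s = ⨆ n, μ (s ∩ level F n) := by
  conv_lhs => rw [← inter_univ s, ← iUnion_level, inter_iUnion]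
  exact Monotone.measure_iUnion fun _ _ h => inter_subset_inter_right _ (level_mono h)

theorem measure_preimage_conjGLB_of_mem_cylinders {μ : Measure (LSpace F)}
    (hinv : ∀ H : GLBs F, Finitary H → Measure.map (conjGLB H) μ = μ) (G : GLBs F)
    {S : Set (LSpace F)} (hS : S ∈ cylinders F) : μ (conjGLB G ⁻¹' S) = μ S := by
  obtain ⟨b, hg, hginv⟩ := G.exists_upperFrom
  have key : ∀ p, ∃ H : GLBs F, (∀ a, MapsTo (conjGLB H.inv) (level F a) (level F (max a b))) ∧
      μ (conjGLB G ⁻¹' S ∩ level F p) = μ (S ∩ conjGLB H.inv ⁻¹' level F p) := by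
    intro p
    obtain ⟨m, hm, hpre⟩ := preimage_conjGLB_inter_level_eq_trunc hg hginv hS p
    refine ⟨G.trunc hg hginv hm,
      mapsTo_conjGLB_level (G := (G.trunc hg hginv hm).inv) (hginv.trunc m) (hg.trunc m), ?_⟩
    rw [hpre, measure_preimage_conjGLB_inter_level (hinv _ (G.finitary_trunc hg hginv hm))
      (isOpen_of_mem_cylinders hS).measurableSet]
  apply le_antisymm
  · rw [measure_eq_iSup_inter_level μ (conjGLB G ⁻¹' S)]
    refine iSup_le fun p => ?_
    obtain ⟨H, -, hp⟩ := key p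
    exact hp ▸ measure_mono inter_subset_left
  · rw [measure_eq_iSup_inter_level μ S]
    refine iSup_le fun a => ?_
    obtain ⟨H, hmaps, hp⟩ := key (max a b)
    calc μ (S ∩ level F a) ≤ μ (S ∩ conjGLB H.inv ⁻¹' level F (max a b)) :=
          measure_mono (inter_subset_inter_right _ (hmaps a))
      _ = μ (conjGLB G ⁻¹' S ∩ level F (max a b)) := hp.symm
      _ ≤ μ (conjGLB G ⁻¹' S) := measure_mono inter_subset_left

end Invariance

/-- Any Radon measure (finite on compact sets) on `𝕃(q)` invariant under conjugation by the
finitary group `GL(∞, q)` is automatically invariant under conjugation by the bigger group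
`𝔾𝕃𝔹` of invertible almost upper triangular matrices. -/
theorem stmt7 {F : Type*} [Field F] [Fintype F]
    (μ : Measure (LSpace F)) [IsFiniteMeasureOnCompacts μ]
    (hinv : ∀ G : GLBs F, Finitary G → Measure.map (conjGLB G) μ = μ) :
    ∀ G : GLBs F, Measure.map (conjGLB G) μ = μ := by
  intro G
  refine (Measure.ext_of_generateFrom_of_iUnion (LSpace.cylinders F) (LSpace.level F)
    LSpace.borel_eq_generateFrom_cylinders LSpace.isPiSystem_cylinders LSpace.iUnion_level
    LSpace.level_mem_cylinders (fun n => (LSpace.isCompact_level n).measure_lt_top.ne)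
    fun S hS => ?_).symm
  rw [Measure.map_apply (continuous_conjGLB G).measurable
    (LSpace.isOpen_of_mem_cylinders hS).measurableSet]
  exact (measure_preimage_conjGLB_of_mem_cylinders hinv G hS).symm
end

section
/- Let V be a finite-dimensional vector space over F_{q^2} equipped with a nondegenerate sesquilinear Hermitian form τ (with respect to the Frobenius involution x ↦ x^q), and let X : V → V be a nilpotent τ-skew-Hermitian operator. If dim V = 2m, there exists a complete flag 0 ⊂ V_1 ⊂ ... ⊂ V_m ⊂ V_{m-1}^⊥ ⊂ ... ⊂ V_1^⊥ ⊂ V preserved by X in which V_1, ..., V_m are τ-isotropic; if dim V = 2m+1 the analogous flag 0 ⊂ V_1 ⊂ ... ⊂ V_m ⊂ V_m^⊥ ⊂ ... ⊂ V_1^⊥ ⊂ V exists. Equivalently, every nilpotent conjugacy class in the unitary Lie algebra u(N, q^2) (defined with the antidiagonal Hermitian form) contains a strictly upper triangular matrix. -/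
/-!
The isotropic half `V₁ ⊂ ⋯ ⊂ V_m` of the flag is built one vector at a time and then completed
by the orthogonal complements `V_i^⊥`, which are `X`-stable because `X` is skew and have
dimension `N - i` because `τ` is nondegenerate.

To extend an `X`-stable isotropic `U` with `dim U + 2 ≤ dim U^⊥` one needs `v ∈ U^⊥ \ U` with
`τ(v, v) = 0` and `X v ∈ U`. Let `m` be least with `X^m U^⊥ ⊆ U`. If `m = 1`, any isotropic
vector of `U^⊥` outside `U` will do; it exists because every nonzero `F_q`-scalar is a norm
`x^(q+1)`, so every plane contains an isotropic line. If `m ≥ 2`, `v = X^(m-1) w ∉ U` works.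
-/

open Module Submodule

theorem FiniteField.exists_mul_pow_eq_of_pow_eq {K : Type*} [Field K] [Fintype K] {q : ℕ}
    (hcard : Fintype.card K = q ^ 2) {b : K} (hb : b ^ q = b) (hb0 : b ≠ 0) :
    ∃ x : K, x * x ^ q = b := by
  classical
  have hq : 1 ≤ q := by
    rcases q with _ | q
    · simp at hcard
    · omega
  have hunits : Nat.card Kˣ = (q - 1) * (q + 1) := by
    rw [Nat.card_eq_fintype_card, Fintype.card_units, hcard, mul_comm, ← Nat.sq_sub_sq, one_pow]
  -- the `(q+1)`-th powers are exactly the units of order dividing `q - 1`: both have `q - 1`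
  -- elements in the cyclic group `Kˣ`
  have hrange : (powMonoidHom (q + 1) : Kˣ →* Kˣ).range = (powMonoidHom (q - 1)).ker := by
    refine Subgroup.eq_of_le_of_card_ge ?_ ?_
    · rintro _ ⟨x, rfl⟩
      change (x ^ (q + 1)) ^ (q - 1) = 1
      rw [← pow_mul, mul_comm, ← hunits, pow_card_eq_one']
    · rw [IsCyclic.card_powMonoidHom_range, IsCyclic.card_powMonoidHom_ker, hunits,
        Nat.gcd_mul_left_left, Nat.gcd_mul_right_left, Nat.mul_div_cancel _ (by omega)]
  have hbker : Units.mk0 b hb0 ∈ (powMonoidHom (q - 1) : Kˣ →* Kˣ).ker := by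
    refine Units.ext ?_
    rw [powMonoidHom_apply, Units.val_pow_eq_pow_val, Units.val_mk0, Units.val_one]
    exact (mul_eq_right₀ hb0).mp (by rw [← pow_succ, Nat.sub_add_cancel hq, hb])
  obtain ⟨x, hx⟩ := hrange ▸ hbker
  exact ⟨x, by simpa [← pow_succ'] using congrArg Units.val hx⟩

section Hermitian

variable {K V : Type*} [Field K] [AddCommGroup V] [Module K V] {σ : K →+* K}
  {B : V →ₗ[K] V →ₛₗ[σ] K}

theorem isRefl_of_hermitian (hB : ∀ x y, σ (B x y) = B y x) : B.IsRefl := fun x y h => by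
  rw [← hB, h, map_zero]

theorem finrank_range_of_injective_semilinear {M N : Type*} [AddCommGroup M] [Module K M]
    [AddCommGroup N] [Module K N] [RingHomSurjective σ] {f : M →ₛₗ[σ] N}
    (hf : Function.Injective f) : finrank K (LinearMap.range f) = finrank K M := by
  have h := lift_rank_eq_of_equiv_equiv σ (AddEquiv.ofBijective f.rangeRestrict
      ⟨(LinearMap.injective_rangeRestrict_iff f).mpr hf, f.surjective_rangeRestrict⟩)
    ⟨σ.injective, RingHomSurjective.is_surjective⟩ (fun r m => f.rangeRestrict.map_smulₛₗ r m)
  have h' := congrArg Cardinal.toNat h.symm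
  rwa [Cardinal.toNat_lift, Cardinal.toNat_lift] at h'

theorem orthogonalBilin_eq_dualCoannihilator [RingHomSurjective σ]
    (hB : B.IsRefl) (W : Submodule K V) :
    W.orthogonalBilin B = (LinearMap.range (B.flip.domRestrict W)).dualCoannihilator := by
  ext y
  simp only [mem_orthogonalBilin_iff, mem_dualCoannihilator, LinearMap.mem_range,
    forall_exists_index, LinearMap.domRestrict_apply, Subtype.forall]
  constructor
  · rintro h _ x hx rfl
    exact hB.eq_zero (h x hx)
  · exact fun h x hx => hB.eq_zero (h _ x hx rfl)

theorem finrank_add_finrank_orthogonalBilin [FiniteDimensional K V] [RingHomSurjective σ]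
    (hB : B.IsRefl) (hnd : B.SeparatingLeft) (W : Submodule K V) :
    finrank K W + finrank K (W.orthogonalBilin B) = finrank K V := by
  have hinj : Function.Injective (B.flip.domRestrict W) := by
    rw [← LinearMap.ker_eq_bot, LinearMap.ker_eq_bot']
    intro w hw
    refine Subtype.ext (hnd w fun y => ?_)
    exact hB.eq_zero (LinearMap.congr_fun hw y)
  rw [orthogonalBilin_eq_dualCoannihilator hB, ← finrank_range_of_injective_semilinear hinj]
  exact Subspace.finrank_add_finrank_dualCoannihilator_eq _

theorem orthogonalBilin_orthogonalBilin [FiniteDimensional K V] [RingHomSurjective σ]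
    (hB : B.IsRefl) (hnd : B.SeparatingLeft) (W : Submodule K V) :
    (W.orthogonalBilin B).orthogonalBilin B = W := by
  refine (eq_of_le_of_finrank_le (le_orthogonalBilin_orthogonalBilin
    hB) ?_).symm
  have h₁ := finrank_add_finrank_orthogonalBilin hB hnd W
  have h₂ := finrank_add_finrank_orthogonalBilin hB hnd (W.orthogonalBilin B)
  omega

theorem orthogonalBilin_sup (S T : Submodule K V) :
    (S ⊔ T).orthogonalBilin B = S.orthogonalBilin B ⊓ T.orthogonalBilin B := by
  refine le_antisymm (le_inf (orthogonalBilin_le le_sup_left)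
    (orthogonalBilin_le le_sup_right)) fun y ⟨hS, hT⟩ x hx => ?_
  obtain ⟨s, hs, t, ht, rfl⟩ := mem_sup.mp hx
  rw [map_add, LinearMap.add_apply, hS s hs, hT t ht, add_zero]

theorem orthogonalBilin_mem_invtSubmodule {X : Module.End K V} (hX : B.IsAdjointPair B X (-X))
    {W : Submodule K V} (hW : W ∈ X.invtSubmodule) :
    W.orthogonalBilin B ∈ X.invtSubmodule := fun y hy x hx => by
  have h := hX x y
  rw [hy _ (hW hx), Pi.neg_apply, map_neg, eq_comm, neg_eq_zero] at h
  exact h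

theorem exists_ne_zero_isotropic [FiniteDimensional K V]
    (hnorm : ∀ b, σ b = b → b ≠ 0 → ∃ x, x * σ x = b) (hB : ∀ x y, σ (B x y) = B y x)
    {U : Submodule K V} (hU : 2 ≤ finrank K U) : ∃ u ∈ U, u ≠ 0 ∧ B u u = 0 := by
  obtain ⟨u₀, hu₀U, hu₀⟩ := U.exists_mem_ne_zero_of_ne_bot (by rintro rfl; simp at hU)
  by_cases ha : B u₀ u₀ = 0
  · exact ⟨u₀, hu₀U, hu₀, ha⟩
  have hker : LinearMap.ker ((B.flip u₀).domRestrict U) ≠ ⊥ := fun h => by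
    have := LinearMap.finrank_le_finrank_of_injective (LinearMap.ker_eq_bot.mp h)
    rw [finrank_self] at this
    omega
  obtain ⟨⟨u₁, hu₁U⟩, h₁₀, hu₁⟩ := exists_mem_ne_zero_of_ne_bot hker
  replace h₁₀ : B u₁ u₀ = 0 := h₁₀
  have h₀₁ : B u₀ u₁ = 0 := (isRefl_of_hermitian hB).eq_zero h₁₀
  by_cases hb : B u₁ u₁ = 0
  · exact ⟨u₁, hu₁U, by simpa using hu₁, hb⟩
  -- `x • u₀ + u₁` is isotropic as soon as `x * σ x = -B u₁ u₁ / B u₀ u₀`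
  obtain ⟨x, hx⟩ := hnorm (-(B u₁ u₁ / B u₀ u₀)) (by simp only [map_neg, map_div₀, hB])
    (by simp [ha, hb])
  refine ⟨x • u₀ + u₁, add_mem (smul_mem _ _ hu₀U) hu₁U, fun h => ?_, ?_⟩
  · have hx0 : x * B u₀ u₀ = 0 := by
      simpa [h₁₀] using congrArg (B · u₀) h
    rw [mul_eq_zero_iff_right ha] at hx0
    simp [hx0, ha, hb] at hx
  · simp only [map_add, LinearMap.add_apply, map_smul, map_smulₛₗ, LinearMap.smul_apply,
      smul_eq_mul, h₀₁, h₁₀]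
    field_simp at hx
    linear_combination hx

theorem exists_isotropic_mem_not_mem [FiniteDimensional K V]
    (hnorm : ∀ b, σ b = b → b ≠ 0 → ∃ x, x * σ x = b) (hB : ∀ x y, σ (B x y) = B y x)
    {U P : Submodule K V} (h : finrank K U + 2 ≤ finrank K P) : ∃ v ∈ P, v ∉ U ∧ B v v = 0 := by
  obtain ⟨C, hC⟩ := U.exists_isCompl
  have h₁ := finrank_sup_add_finrank_inf_eq C P
  have h₂ := finrank_add_eq_of_isCompl hC
  have h₃ := finrank_le (C ⊔ P)
  obtain ⟨v, ⟨hvC, hvP⟩, hv0, hvv⟩ := exists_ne_zero_isotropic hnorm hB (U := C ⊓ P) (by omega)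
  exact ⟨v, hvP, fun hvU => hv0 (disjoint_def.mp hC.disjoint v hvU hvC), hvv⟩

theorem LinearMap.IsAdjointPair.pow {X Y : Module.End K V} (h : B.IsAdjointPair B X Y) (n : ℕ) :
    B.IsAdjointPair B ⇑(X ^ n) ⇑(Y ^ n) := by
  induction n with
  | zero => exact LinearMap.isAdjointPair_one
  | succ n ih => rw [pow_succ, pow_succ']; exact ih.mul h

theorem exists_isotropic_extension [FiniteDimensional K V]
    (hnorm : ∀ b, σ b = b → b ≠ 0 → ∃ x, x * σ x = b) (hB : ∀ x y, σ (B x y) = B y x)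
    {X : Module.End K V} (hXnil : IsNilpotent X) (hX : B.IsAdjointPair B X (-X))
    {U : Submodule K V} (hUX : U ∈ X.invtSubmodule)
    (hU : finrank K U + 2 ≤ finrank K (U.orthogonalBilin B)) :
    ∃ v ∈ U.orthogonalBilin B, v ∉ U ∧ X v ∈ U ∧ B v v = 0 := by
  classical
  set P := U.orthogonalBilin B
  have hPX : P ∈ X.invtSubmodule := orthogonalBilin_mem_invtSubmodule hX hUX
  obtain ⟨k, hk⟩ := hXnil
  have hex : ∃ m, ∀ x ∈ P, (X ^ m) x ∈ U := ⟨k, fun x _ => by simp [hk]⟩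
  obtain ⟨m, hm, hmin⟩ : ∃ m, (∀ x ∈ P, (X ^ m) x ∈ U) ∧ ∀ j < m, ¬∀ x ∈ P, (X ^ j) x ∈ U :=
    ⟨Nat.find hex, Nat.find_spec hex, fun j => Nat.find_min hex⟩
  rcases m with _ | _ | m
  · have hPU : P ≤ U := fun x hx => by simpa using hm x hx
    have := finrank_mono hPU
    omega
  · obtain ⟨v, hvP, hvU, hvv⟩ := exists_isotropic_mem_not_mem hnorm hB hU
    exact ⟨v, hvP, hvU, by simpa using hm v hvP, hvv⟩
  -- `v = X^(m+1) w` with `X^(m+1) w ∉ U`; its self-pairing is `± B w (X^(2m+2) w)`, which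
  -- vanishes because `X^(2m+2) w = X^m (X^(m+2) w) ∈ U` and `w ∈ Uᗮ`.
  obtain ⟨w, hwP, hwU⟩ : ∃ w ∈ P, (X ^ (m + 1)) w ∉ U := by
    simpa using hmin (m + 1) (by omega)
  refine ⟨(X ^ (m + 1)) w, P.le_comap_pow_of_le_comap hPX _ hwP, hwU, ?_, ?_⟩
  · simpa [← Module.End.mul_apply, ← pow_succ'] using hm w hwP
  · have hU' : (X ^ (m + 1)) ((X ^ (m + 1)) w) ∈ U := by
      rw [← Module.End.mul_apply, ← pow_add, show m + 1 + (m + 1) = m + (m + 2) by ring,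
        pow_add, Module.End.mul_apply]
      exact U.le_comap_pow_of_le_comap hUX _ (hm w hwP)
    have hX' : B.IsAdjointPair B X ⇑(-X) := hX
    rw [hX'.pow (m + 1), ← neg_one_smul K X, smul_pow, LinearMap.smul_apply, map_smulₛₗ,
      (isRefl_of_hermitian hB).eq_zero (hwP _ hU'), smul_zero]

theorem orthogonalBilin_eq_self [FiniteDimensional K V] [RingHomSurjective σ]
    (hB : B.IsRefl) (hnd : B.SeparatingLeft) {U : Submodule K V}
    (hU : U ≤ U.orthogonalBilin B) (h : 2 * finrank K U = finrank K V) :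
    U.orthogonalBilin B = U :=
  (eq_of_le_of_finrank_eq hU (by have := finrank_add_finrank_orthogonalBilin hB hnd U; omega)).symm

theorem sup_span_singleton_le_orthogonalBilin (hB : B.IsRefl)
    {U : Submodule K V} {v : V} (hU : U ≤ U.orthogonalBilin B) (hvU : v ∈ U.orthogonalBilin B)
    (hvv : B v v = 0) : U ⊔ K ∙ v ≤ (U ⊔ K ∙ v).orthogonalBilin B := by
  rw [orthogonalBilin_sup, LinearMap.orthogonal_span_singleton_eq_to_lin_ker, sup_le_iff,
    le_inf_iff, le_inf_iff, span_singleton_le_iff_mem, span_singleton_le_iff_mem]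
  exact ⟨⟨hU, fun u hu => hB.eq_zero (hvU u hu)⟩, hvU, hvv⟩

theorem sup_span_singleton_mem_invtSubmodule {X : Module.End K V} {U : Submodule K V} {v : V}
    (hU : U ∈ X.invtSubmodule) (hXv : X v ∈ U) : U ⊔ K ∙ v ∈ X.invtSubmodule := by
  rw [Module.End.mem_invtSubmodule, sup_le_iff, span_singleton_le_iff_mem]
  exact ⟨hU.trans (comap_mono le_sup_left), mem_sup_left hXv⟩

theorem exists_isotropic_invariant_chain [FiniteDimensional K V] [RingHomSurjective σ]
    (hnorm : ∀ b, σ b = b → b ≠ 0 → ∃ x, x * σ x = b) (hB : ∀ x y, σ (B x y) = B y x)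
    (hnd : B.SeparatingLeft) {X : Module.End K V} (hXnil : IsNilpotent X)
    (hX : B.IsAdjointPair B X (-X)) :
    ∃ F : ℕ → Submodule K V, Monotone F ∧ ∀ i, 2 * i ≤ finrank K V →
      finrank K (F i) = i ∧ F i ≤ (F i).orthogonalBilin B ∧ F i ∈ X.invtSubmodule := by
  choose! v hv using fun U : Submodule K V => exists_isotropic_extension hnorm hB hXnil hX (U := U)
  set F : ℕ → Submodule K V := fun i => (fun U => U ⊔ K ∙ v U)^[i] ⊥
  have hF0 : F 0 = ⊥ := rfl
  have hFsucc (i : ℕ) : F (i + 1) = F i ⊔ K ∙ v (F i) := Function.iterate_succ_apply' _ _ _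
  refine ⟨F, monotone_nat_of_le_succ fun i => hFsucc i ▸ le_sup_left, fun i hi => ?_⟩
  induction i with
  | zero => exact hF0 ▸ ⟨finrank_bot K V, bot_le, Module.End.invtSubmodule.bot_mem X⟩
  | succ i ih =>
    obtain ⟨hdim, hiso, hinv⟩ := ih (by omega)
    have hperp := finrank_add_finrank_orthogonalBilin (isRefl_of_hermitian hB) hnd (F i)
    obtain ⟨hvU, hvU', hXv, hvv⟩ := hv _ hinv (by omega)
    rw [hFsucc]
    exact ⟨by rw [finrank_sup_span_singleton hvU', hdim],
      sup_span_singleton_le_orthogonalBilin (isRefl_of_hermitian hB) hiso hvU hvv,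
      sup_span_singleton_mem_invtSubmodule hinv hXv⟩

theorem exists_selfDual_invariant_flag [FiniteDimensional K V] [RingHomSurjective σ]
    (hnorm : ∀ b, σ b = b → b ≠ 0 → ∃ x, x * σ x = b) (hB : ∀ x y, σ (B x y) = B y x)
    (hnd : B.SeparatingLeft) {X : Module.End K V} (hXnil : IsNilpotent X)
    (hX : B.IsAdjointPair B X (-X)) :
    ∃ W : ℕ → Submodule K V,
      (∀ i j, i ≤ j → j ≤ finrank K V → W i ≤ W j) ∧
      (∀ i ≤ finrank K V, finrank K (W i) = i) ∧
      (∀ i ≤ finrank K V, W i ∈ X.invtSubmodule) ∧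
      (∀ i ≤ finrank K V, W (finrank K V - i) = (W i).orthogonalBilin B) := by
  obtain ⟨F, hFmono, hF⟩ := exists_isotropic_invariant_chain hnorm hB hnd hXnil hX
  have hrefl := isRefl_of_hermitian hB
  set N := finrank K V
  have hperp (i : ℕ) := finrank_add_finrank_orthogonalBilin hrefl hnd (F i)
  obtain ⟨W, hWle, hWgt⟩ : ∃ W : ℕ → Submodule K V, (∀ i, 2 * i ≤ N → W i = F i) ∧
      ∀ i, N < 2 * i → W i = (F (N - i)).orthogonalBilin B :=
    ⟨fun i => if 2 * i ≤ N then F i else (F (N - i)).orthogonalBilin B,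
      fun i h => if_pos h, fun i h => if_neg (by omega)⟩
  refine ⟨W, ?_, ?_, ?_, ?_⟩
  · intro i j hij hjN
    by_cases hj : 2 * j ≤ N
    · rw [hWle i (by omega), hWle j hj]
      exact hFmono hij
    rw [hWgt j (by omega)]
    by_cases hi : 2 * i ≤ N
    · -- both `F i` and `F (N - j)` lie in the isotropic `F (max i (N - j))`
      rw [hWle i hi]
      exact (hFmono (le_max_left i (N - j))).trans <| (hF _ (by omega)).2.1.trans <|
        orthogonalBilin_le (hFmono (le_max_right i (N - j)))
    · rw [hWgt i (by omega)]
      exact orthogonalBilin_le (hFmono (by omega))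
  · intro i hi
    by_cases h : 2 * i ≤ N
    · rw [hWle i h, (hF i h).1]
    · have := hperp (N - i)
      rw [hWgt i (by omega)]
      have := (hF (N - i) (by omega)).1
      omega
  · intro i hi
    by_cases h : 2 * i ≤ N
    · rw [hWle i h]
      exact (hF i h).2.2
    · rw [hWgt i (by omega)]
      exact orthogonalBilin_mem_invtSubmodule hX (hF (N - i) (by omega)).2.2
  · intro i hi
    rcases lt_trichotomy (2 * i) N with h | h | h
    · rw [hWgt _ (by omega), hWle i h.le, Nat.sub_sub_self hi]
    · rw [show N - i = i by omega, hWle i h.le,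
        orthogonalBilin_eq_self hrefl hnd (hF i h.le).2.1 (by rw [(hF i h.le).1, h])]
    · rw [hWle _ (by omega), hWgt i h, orthogonalBilin_orthogonalBilin hrefl hnd]

end Hermitian

theorem stmt8_general {K V : Type*} [Field K] [Fintype K] [AddCommGroup V] [Module K V]
    [FiniteDimensional K V]
    (q : ℕ)
    (hcard : Fintype.card K = q ^ 2)
    (σ : K →+* K) (hσ : ∀ x : K, σ x = x ^ q)
    (B : V → V → K)
    (hB1 : ∀ x y z, B (x + y) z = B x z + B y z)
    (hB2 : ∀ x y z, B x (y + z) = B x y + B x z)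
    (hB3 : ∀ (a : K) (x y : V), B (a • x) y = a * B x y)
    (hB4 : ∀ (a : K) (x y : V), B x (a • y) = σ a * B x y)
    (hherm : ∀ x y, σ (B x y) = B y x)
    (hnd : ∀ x, (∀ y, B x y = 0) → x = 0)
    (X : Module.End K V) (hXnil : IsNilpotent X)
    (hXskew : ∀ u v, B (X u) v + B u (X v) = 0) :
    ∃ W : ℕ → Submodule K V,
      W 0 = ⊥ ∧ W (Module.finrank K V) = ⊤ ∧
      (∀ i j, i ≤ j → j ≤ Module.finrank K V → W i ≤ W j) ∧
      (∀ i, i ≤ Module.finrank K V → Module.finrank K (W i) = i) ∧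
      (∀ i, i ≤ Module.finrank K V → ∀ v ∈ W i, X v ∈ W i) ∧
      (∀ i, i ≤ Module.finrank K V → ∀ v : V,
        (v ∈ W (Module.finrank K V - i) ↔ ∀ u ∈ W i, B u v = 0)) ∧
      (∀ i, 2 * i ≤ Module.finrank K V → ∀ u ∈ W i, ∀ u' ∈ W i, B u u' = 0) := by
  let B' : V →ₗ[K] V →ₛₗ[σ] K := LinearMap.mk₂'ₛₗ (RingHom.id K) σ B hB1 hB3 hB2 hB4
  have hσσ (x : K) : σ (σ x) = x := by
    rw [hσ, hσ, ← pow_mul, ← sq, ← hcard, FiniteField.pow_card]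
  have : RingHomSurjective σ := ⟨Function.LeftInverse.surjective hσσ⟩
  have hnorm (b : K) (hb : σ b = b) (hb0 : b ≠ 0) : ∃ x, x * σ x = b := by
    simp only [hσ] at hb ⊢
    exact FiniteField.exists_mul_pow_eq_of_pow_eq hcard hb hb0
  have hX : B'.IsAdjointPair B' X (-X) := fun u v => by
    rw [Pi.neg_apply, map_neg]
    exact eq_neg_of_add_eq_zero_left (hXskew u v)
  obtain ⟨W, hmono, hrank, hinv, horth⟩ :=
    exists_selfDual_invariant_flag (B := B') hnorm hherm hnd hXnil hX
  have hperp (i) (hi : i ≤ finrank K V) (v : V) :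
      v ∈ W (finrank K V - i) ↔ ∀ u ∈ W i, B u v = 0 := by
    rw [horth i hi]
    rfl
  refine ⟨W, finrank_eq_zero.mp (hrank 0 (Nat.zero_le _)), eq_top_of_finrank_eq (hrank _ le_rfl),
    hmono, hrank, hinv, hperp, fun i hi u hu u' hu' => ?_⟩
  exact (hperp i (by omega) u').mp (hmono _ _ (by omega) (by omega) hu') u hu

/-- Let `K = F_{q²}` (q an odd prime power) with Frobenius involution `σ x = x^q`, and let
`V` be a finite-dimensional `K`-vector space with a nondegenerate sesquilinear Hermitian form
`B`.  If `X` is a nilpotent `B`-skew-Hermitian operator on `V`, then there is a complete flag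
`0 = W 0 ⊂ W 1 ⊂ … ⊂ W N = V` (`N = dim V`) preserved by `X`, such that the orthogonal
complement of `W i` is `W (N − i)` for all `i ≤ N`; in particular the subspaces `W i` with
`2 i ≤ N` are isotropic.  (For `N = 2m` this is the flag
`V₁ ⊂ … ⊂ V_m ⊂ V_{m-1}^⊥ ⊂ … ⊂ V₁^⊥`, for `N = 2m+1` the flag
`V₁ ⊂ … ⊂ V_m ⊂ V_m^⊥ ⊂ … ⊂ V₁^⊥`; equivalently, every nilpotent conjugacy class in
`u(N, q²)` contains a strictly upper triangular matrix.) -/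
theorem stmt8 {K V : Type*} [Field K] [Fintype K] [AddCommGroup V] [Module K V]
    [FiniteDimensional K V]
    (p q : ℕ) (hp : p.Prime) (hpodd : Odd p) (hq : ∃ m : ℕ, 0 < m ∧ q = p ^ m)
    (hcard : Fintype.card K = q ^ 2)
    (σ : K →+* K) (hσ : ∀ x : K, σ x = x ^ q)
    (B : V → V → K)
    (hB1 : ∀ x y z, B (x + y) z = B x z + B y z)
    (hB2 : ∀ x y z, B x (y + z) = B x y + B x z)
    (hB3 : ∀ (a : K) (x y : V), B (a • x) y = a * B x y)
    (hB4 : ∀ (a : K) (x y : V), B x (a • y) = σ a * B x y)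
    (hherm : ∀ x y, σ (B x y) = B y x)
    (hnd : ∀ x, (∀ y, B x y = 0) → x = 0)
    (X : Module.End K V) (hXnil : IsNilpotent X)
    (hXskew : ∀ u v, B (X u) v + B u (X v) = 0) :
    ∃ W : ℕ → Submodule K V,
      W 0 = ⊥ ∧ W (Module.finrank K V) = ⊤ ∧
      (∀ i j, i ≤ j → j ≤ Module.finrank K V → W i ≤ W j) ∧
      (∀ i, i ≤ Module.finrank K V → Module.finrank K (W i) = i) ∧
      (∀ i, i ≤ Module.finrank K V → ∀ v ∈ W i, X v ∈ W i) ∧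
      (∀ i, i ≤ Module.finrank K V → ∀ v : V,
        (v ∈ W (Module.finrank K V - i) ↔ ∀ u ∈ W i, B u v = 0)) ∧
      (∀ i, 2 * i ≤ Module.finrank K V → ∀ u ∈ W i, ∀ u' ∈ W i, B u u' = 0) :=
  stmt8_general q hcard σ hσ B hB1 hB2 hB3 hB4 hherm hnd X hXnil hXskew
end

section
/- Let t be a formal variable (or real parameter), and let Q_λ(;t) be the Hall–Littlewood Q-functions; set Q̃_λ(;t) := (−1)^{n(λ)} Q_λ(;t), where n(λ) = Σ (i−1)λ_i. Write (1−t^2) p_2 · Q̃_μ(;t) = Σ_λ ξ_{λ/μ}(t) Q̃_λ(;t), summed over λ with |λ| = |μ| + 2. Then ξ_{λ/μ}(t) = 0 unless μ ⊆ λ and the two boxes of λ\μ lie either in a single column or in two consecutive columns. Moreover: (1) if λ\μ is a vertical domino in column k, then ξ_{λ/μ}(t) = (1 − t^{m_{k−1}(μ)})(1 − t^{m_{k−1}(μ)−1}); (2) if the two boxes lie in consecutive columns k and k+1, then ξ_{λ/μ}(t) = (−t)^{m_k(μ)} (1+t)(1 − t^{m_{k−1}(μ)}). (Convention: t^{m_0(μ)}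 = t^{m_0(μ)−1} = 0, i.e., the factors involving m_{k−1}(μ) equal 1 when k = 1.) -/
open scoped BigOperators Classical

/-- The type of partitions (Young diagrams). -/
def PartitionF : Type := {f : ℕ → ℕ // IsPartitionFun f}

/-- The size `|μ|` of a partition. -/
noncomputable def psize (μ : PartitionF) : ℕ := ∑ᶠ i, μ.val i

/-- The one-row partition `(r)`. -/
def onerow (r : ℕ) : PartitionF :=
  ⟨fun i => if i = 0 then r else 0, by
    constructor
    · intro a b hab
      dsimp only
      split_ifs <;> omega
    · exact ⟨1, fun n hn => by simp [Nat.one_le_iff_ne_zero.mp hn]⟩⟩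

/-- `λ/μ` is a horizontal strip of size `r`: `μ ⊆ λ`, `|λ| = |μ| + r`, and every column of
`λ` contains at most one more box than the corresponding column of `μ`. -/
def HStrip (r : ℕ) (μ lam : PartitionF) : Prop :=
  (∀ i, μ.val i ≤ lam.val i) ∧ psize lam = psize μ + r ∧
    ∀ k, 1 ≤ k → conjP lam.val k ≤ conjP μ.val k + 1

/-- The Hall–Littlewood Pieri coefficient `ψ_{λ/μ}(t) = Π_{i ∈ I} (1 − t^(m_i(μ)))`, where `I`
is the set of columns `i ≥ 1` such that the strip `λ/μ` has a box in column `i+1` but none in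
column `i` (Macdonald III (5.8′)). -/
noncomputable def psiStrip {A : Type*} [CommRing A] (t : A) (μ lam : PartitionF) : A :=
  ∏ᶠ i : ℕ, if 1 ≤ i ∧ conjP lam.val i = conjP μ.val i ∧
      conjP lam.val (i + 1) = conjP μ.val (i + 1) + 1 then 1 - t ^ mcount μ.val i else 1

/-- `λ` is obtained from `μ` by adding a vertical domino in column `k`. -/
def VDom (μ lam : ℕ → ℕ) (k : ℕ) : Prop :=
  conjP lam k = conjP μ k + 2 ∧ ∀ i, 1 ≤ i → i ≠ k → conjP lam i = conjP μ i

/-- `λ` is obtained from `μ` by adding one box in column `k` and one box in column `k+1`. -/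
def TwoCol (μ lam : ℕ → ℕ) (k : ℕ) : Prop :=
  conjP lam k = conjP μ k + 1 ∧ conjP lam (k + 1) = conjP μ (k + 1) + 1 ∧
    ∀ i, 1 ≤ i → i ≠ k → i ≠ k + 1 → conjP lam i = conjP μ i

/-- The coefficient `ξ_{λ/μ}(t)`: it is
`(1 − t^(m_{k−1}(μ)))(1 − t^(m_{k−1}(μ)−1))` if `λ∖μ` is a vertical domino in column `k`,
`(−t)^(m_k(μ)) (1 + t)(1 − t^(m_{k−1}(μ)))` if the two boxes of `λ∖μ` lie in consecutive
columns `k, k+1`, and `0` otherwise (with the convention `t^(m_0(μ)) = t^(m_0(μ)−1) = 0`,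
i.e. the factors involving `m_{k−1}(μ)` equal `1` when `k = 1`). -/
noncomputable def xiCoef {A : Type*} [CommRing A] (t : A) (μ lam : PartitionF) : A :=
  (∑ᶠ k : ℕ, if 1 ≤ k ∧ VDom μ.val lam.val k then
      (if k = 1 then 1 else
        (1 - t ^ mcount μ.val (k - 1)) * (1 - t ^ (mcount μ.val (k - 1) - 1)))
    else 0)
  + ∑ᶠ k : ℕ, if 1 ≤ k ∧ TwoCol μ.val lam.val k then
      (-t) ^ mcount μ.val k * (1 + t) *
        (if k = 1 then 1 else 1 - t ^ mcount μ.val (k - 1))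
    else 0

/-!
Since `(1 - t²) p₂ = 2 Q_{(2)} - Q_{(1)}²`, two applications of the Pieri rule give
`(1 - t²) p₂ Q_μ = Σ_λ (2 ψ_{λ/μ} - Σ_ν ψ_{ν/μ} ψ_{λ/ν}) Q_λ`, the inner sum running over the ways
`ν` of adding the two boxes of `λ/μ` one at a time; so it suffices to show
`(-1)^(n(λ) + n(μ)) (2 ψ_{λ/μ} - Σ_ν ψ_{ν/μ} ψ_{λ/ν}) = ξ_{λ/μ}` for each `λ`.

Write `λ = μ + e_r + e_s` with rows `r ≤ s`, so that `n(λ) - n(μ) = r + s`. The coefficient `ψ`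
of a single box added in column `c ≥ 2` is `1 - t^(m_{c-1})`, and adding a box in column `c`
changes only `m_{c-1}` and `m_c`. If `r = s`, `λ/μ` is a horizontal domino in columns `c, c + 1`
with `m_c(μ) = 0`, and there is one path. If `μ_r = μ_s`, then `s = r + 1` and `λ/μ` is a
vertical domino: it is not a horizontal strip, and again there is one path. Otherwise the boxes
lie in columns `d < c` and both orders are paths; their contributions cancel `2 ψ_{λ/μ}` unless
`c = d + 1`, in which case `m_d(μ) = s - r` produces the factor `(-t)^(m_d)`.
-/

open Function

/-! ## Column lengths -/

lemma IsPartitionFun.hasFiniteSupport_s12 {f : ℕ → ℕ} (hf : IsPartitionFun f) :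
    f.HasFiniteSupport := by
  obtain ⟨N, hN⟩ := hf.2
  refine (Set.finite_Iio N).subset fun i hi => ?_
  by_contra h
  exact hi (hN i (not_lt.mp h))

lemma setOf_le_eq_Iio_conjP {f : ℕ → ℕ} (hf : IsPartitionFun f) {k : ℕ} (hk : 1 ≤ k) :
    {i | k ≤ f i} = Set.Iio (conjP f k) := by
  have hex : ∃ n, f n < k := by
    obtain ⟨N, hN⟩ := hf.2
    exact ⟨N, by rw [hN N le_rfl]; omega⟩
  have hset : {i | k ≤ f i} = Set.Iio (Nat.find hex) := by
    ext i
    simp only [Set.mem_ofPred_eq, Set.mem_Iio]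
    refine ⟨fun h => ?_, fun h => not_lt.mp (Nat.find_min hex h)⟩
    by_contra h'
    exact (hf.1 (not_lt.mp h')).not_gt (lt_of_lt_of_le (Nat.find_spec hex) h)
  rw [conjP, hset, Nat.card_coe_set_eq, Set.ncard_eq_toFinset_card', Set.toFinset_Iio,
    Nat.card_Iio]

lemma lt_conjP_iff {f : ℕ → ℕ} (hf : IsPartitionFun f) {k : ℕ} (hk : 1 ≤ k) (i : ℕ) :
    i < conjP f k ↔ k ≤ f i := by
  rw [← Set.mem_Iio, ← setOf_le_eq_Iio_conjP hf hk, Set.mem_ofPred_eq]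

lemma conjP_antitone {f : ℕ → ℕ} (hf : IsPartitionFun f) {k l : ℕ} (hk : 1 ≤ k) (hkl : k ≤ l) :
    conjP f l ≤ conjP f k := by
  by_contra h
  have := (lt_conjP_iff hf (hk.trans hkl) (conjP f k)).mp (not_le.mp h)
  exact (lt_irrefl _) ((lt_conjP_iff hf hk _).mpr (hkl.trans this))

lemma le_of_conjP_le {f g : ℕ → ℕ} (hf : IsPartitionFun f) (hg : IsPartitionFun g)
    (h : ∀ k, 1 ≤ k → conjP f k ≤ conjP g k) (i : ℕ) : f i ≤ g i := by
  rcases Nat.eq_zero_or_pos (f i) with h0 | h0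
  · omega
  · exact (lt_conjP_iff hg h0 i).mp
      (lt_of_lt_of_le ((lt_conjP_iff hf h0 i).mpr le_rfl) (h _ h0))

lemma mcount_eq_conjP_sub {f : ℕ → ℕ} (hf : IsPartitionFun f) {j : ℕ} (hj : 1 ≤ j) :
    mcount f j = conjP f j - conjP f (j + 1) := by
  have hset : {i | f i = j} = Set.Ico (conjP f (j + 1)) (conjP f j) := by
    ext i
    have h1 := lt_conjP_iff hf hj i
    have h2 := lt_conjP_iff hf (Nat.le_add_left 1 j) i
    simp only [Set.mem_ofPred_eq, Set.mem_Ico]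
    omega
  rw [mcount, hset, Nat.card_coe_set_eq, Set.ncard_eq_toFinset_card', Set.toFinset_Ico,
    Nat.card_Ico]

lemma mcount_eq_sub_of_rows {f : ℕ → ℕ} (hf : Antitone f) {r s j : ℕ}
    (hbefore : ∀ i < r, j < f i) (hmid : ∀ i, r ≤ i → i < s → f i = j) (hafter : f s < j) :
    mcount f j = s - r := by
  have hset : {i | f i = j} = Set.Ico r s := by
    ext i
    simp only [Set.mem_ofPred_eq, Set.mem_Ico]
    refine ⟨fun hi => ⟨?_, ?_⟩, fun hi => hmid i hi.1 hi.2⟩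
    · by_contra h
      exact (hbefore i (not_le.mp h)).ne' hi
    · by_contra h
      exact (lt_of_le_of_lt (hf (not_lt.mp h)) hafter).ne hi
  rw [mcount, hset, Nat.card_coe_set_eq, Set.ncard_eq_toFinset_card', Set.toFinset_Ico,
    Nat.card_Ico]

lemma sum_range_ite_lt {M c : ℕ} (h : c ≤ M) :
    ∑ i ∈ Finset.range M, (if i < c then 1 else 0) = c := by
  have hfilter : (Finset.range M).filter (· < c) = Finset.range c := by
    ext i
    simp only [Finset.mem_filter, Finset.mem_range]
    omega
  rw [Finset.sum_boole, Nat.cast_id, hfilter, Finset.card_range]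

lemma psize_eq_sum_conjP (μ : PartitionF) {N : ℕ} (hN : μ.1 0 ≤ N) :
    psize μ = ∑ k ∈ Finset.range N, conjP μ.1 (k + 1) := by
  have hrow : ∀ i, μ.1 i = ∑ k ∈ Finset.range N, if k < μ.1 i then 1 else 0 := fun i =>
    (sum_range_ite_lt ((μ.2.1 (Nat.zero_le i)).trans hN)).symm
  have hcol : ∀ k, ∑ i ∈ Finset.range (conjP μ.1 1), (if k < μ.1 i then 1 else 0)
      = conjP μ.1 (k + 1) := fun k => by
    simp only [Nat.lt_iff_add_one_le, ← lt_conjP_iff μ.2 (Nat.le_add_left 1 k)]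
    exact sum_range_ite_lt (conjP_antitone μ.2 le_rfl (Nat.le_add_left 1 k))
  rw [psize, finsum_eq_sum_of_support_subset _ (s := Finset.range (conjP μ.1 1)) fun i hi => by
      simpa [lt_conjP_iff μ.2 le_rfl, Nat.one_le_iff_ne_zero] using hi,
    Finset.sum_congr rfl fun i _ => hrow i, Finset.sum_comm]
  exact Finset.sum_congr rfl fun k _ => hcol k

lemma le_psize (lam : PartitionF) (i : ℕ) : lam.1 i ≤ psize lam :=
  single_le_finsum i lam.2.hasFiniteSupport_s12 fun _ => Nat.zero_le _

lemma eq_zero_of_psize_le (lam : PartitionF) {i : ℕ} (hi : psize lam ≤ i) : lam.1 i = 0 := by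
  by_contra h
  have hrow : i < conjP lam.1 1 := (lt_conjP_iff lam.2 le_rfl i).mpr (Nat.one_le_iff_ne_zero.mpr h)
  have hcol : conjP lam.1 1 ≤ psize lam := by
    rw [psize_eq_sum_conjP lam le_rfl]
    exact Finset.single_le_sum (f := fun k => conjP lam.1 (k + 1)) (fun _ _ => Nat.zero_le _)
      (Finset.mem_range.mpr ((lt_conjP_iff lam.2 le_rfl 0).mp (by omega)))
  omega

lemma setOf_psize_eq_finite (n : ℕ) : {lam : PartitionF | psize lam = n}.Finite := by
  let F : PartitionF → (Fin n → Fin (n + 1)) := fun lam j => ⟨min (lam.1 j) n, by omega⟩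
  refine Set.Finite.of_finite_image (f := F) (Set.toFinite _) fun a ha b hb hab =>
    Subtype.ext (funext fun i => ?_)
  rcases lt_or_ge i n with hi | hi
  · have hF := congrArg Fin.val (congrFun hab ⟨i, hi⟩)
    have hai := le_psize a i
    have hbi := le_psize b i
    simp only [F, Set.mem_ofPred_eq] at hF ha hb
    omega
  · rw [eq_zero_of_psize_le a (ha.trans_le hi), eq_zero_of_psize_le b (hb.trans_le hi)]

/-! ## Adding boxes -/

lemma hasFiniteSupport_single (r : ℕ) : (Pi.single r 1 : ℕ → ℕ).HasFiniteSupport :=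
  (Set.finite_singleton r).subset (Pi.support_single_subset)

lemma finsum_single (r : ℕ) : ∑ᶠ i, (Pi.single r 1 : ℕ → ℕ) i = 1 := by
  rw [finsum_eq_single _ r fun i hi => by simp [hi]]
  simp

lemma conjP_add_single {f : ℕ → ℕ} (hf : IsPartitionFun f) (r : ℕ) {k : ℕ} (hk : 1 ≤ k) :
    conjP (f + Pi.single r 1) k = conjP f k + if k = f r + 1 then 1 else 0 := by
  unfold conjP
  split_ifs with h
  · have hset : {i | k ≤ (f + Pi.single r 1 : ℕ → ℕ) i} = insert r {i | k ≤ f i} := by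
      ext i
      by_cases hi : i = r
      · simp [hi]
        omega
      · simp [hi]
    rw [hset, Nat.card_coe_set_eq, Nat.card_coe_set_eq, Set.ncard_insert_of_notMem (by simp; omega)
      (by rw [setOf_le_eq_Iio_conjP hf hk]; exact Set.finite_Iio _)]
  · congr 3
    ext i
    by_cases hi : i = r
    · simp [hi]
      omega
    · simp [hi]

lemma mcount_add_single {f : ℕ → ℕ} (hf : IsPartitionFun f) {r : ℕ}
    (hg : IsPartitionFun (f + Pi.single r 1)) {j : ℕ} (hj : 1 ≤ j) :
    mcount (f + Pi.single r 1) j + (if j = f r then 1 else 0)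
      = mcount f j + if j = f r + 1 then 1 else 0 := by
  have hf' := conjP_antitone hf hj (Nat.le_add_right j 1)
  have hg' := conjP_antitone hg hj (Nat.le_add_right j 1)
  rw [mcount_eq_conjP_sub hf hj, mcount_eq_conjP_sub hg hj] at *
  rw [conjP_add_single hf r hj, conjP_add_single hf r (Nat.le_add_left 1 j)] at *
  split_ifs at * <;> omega

lemma isPartitionFun_add_single {f : ℕ → ℕ} (hf : IsPartitionFun f) {r : ℕ}
    (hr : ∀ i < r, f r < f i) : IsPartitionFun (f + Pi.single r 1) := by
  obtain ⟨N, hN⟩ := hf.2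
  refine ⟨fun a b hab => ?_, max N (r + 1), fun n hn => ?_⟩
  · have := hf.1 hab
    have := hr a
    simp only [Pi.add_apply, Pi.single_apply]
    split_ifs <;> subst_vars <;> omega
  · simp [hN n (le_of_max_le_left hn), show n ≠ r by omega]

lemma psize_eq_add_finsum {μ lam : PartitionF} {g : ℕ → ℕ} (h : lam.1 = μ.1 + g)
    (hg : g.HasFiniteSupport) : psize lam = psize μ + ∑ᶠ i, g i := by
  rw [psize, psize, h]
  exact finsum_add_distrib μ.2.hasFiniteSupport_s12 hg

lemma nstat_add_single_s12 {f : ℕ → ℕ} (hf : f.HasFiniteSupport) (r : ℕ) :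
    nstat (f + Pi.single r 1) = nstat f + r := by
  have hsingle : ∑ᶠ i, i * (Pi.single r 1 : ℕ → ℕ) i = r := by
    rw [finsum_eq_single _ r fun i hi => by simp [hi]]
    simp
  simp only [nstat, Pi.add_apply, mul_add]
  rw [finsum_add_distrib (hf.subset (support_mul_subset_right _ _))
    ((hasFiniteSupport_single r).subset (support_mul_subset_right _ _)), hsingle]

lemma eq_zero_of_finsum_eq_zero {g : ℕ → ℕ} (hg : g.HasFiniteSupport) (h : ∑ᶠ i, g i = 0) :
    g = 0 :=
  funext fun i => Nat.le_zero.mp (h ▸ single_le_finsum i hg fun _ => Nat.zero_le _)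

lemma exists_eq_single_add_of_finsum_eq_succ {g : ℕ → ℕ} (hg : g.HasFiniteSupport) {n : ℕ}
    (h : ∑ᶠ i, g i = n + 1) :
    ∃ (r : ℕ) (g' : ℕ → ℕ), g = Pi.single r 1 + g' ∧ g'.HasFiniteSupport ∧ ∑ᶠ i, g' i = n := by
  obtain ⟨r, hr⟩ : ∃ r, g r ≠ 0 := by
    by_contra! h0
    rw [finsum_eq_zero_of_forall_eq_zero h0] at h
    omega
  have hsplit : g = Pi.single r 1 + (g - Pi.single r 1) := by
    funext i
    by_cases hi : i = r
    · simp [hi]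
      omega
    · simp [hi]
  have hfin : (g - Pi.single r 1).HasFiniteSupport :=
    hg.subset fun i hi => by simp [Pi.single_apply] at hi ⊢; omega
  refine ⟨r, g - Pi.single r 1, hsplit, hfin, ?_⟩
  rw [hsplit, Pi.add_def, finsum_add_distrib (hasFiniteSupport_single r) hfin, finsum_single] at h
  omega

def SkewOfSize (n : ℕ) (μ lam : PartitionF) : Prop :=
  (∀ i, μ.1 i ≤ lam.1 i) ∧ psize lam = psize μ + n

lemma SkewOfSize.trans {m n : ℕ} {μ ν lam : PartitionF} (h₁ : SkewOfSize m μ ν)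
    (h₂ : SkewOfSize n ν lam) : SkewOfSize (m + n) μ lam :=
  ⟨fun i => (h₁.1 i).trans (h₂.1 i), by rw [h₂.2, h₁.2, add_assoc]⟩

lemma HStrip.skewOfSize {r : ℕ} {μ lam : PartitionF} (h : HStrip r μ lam) :
    SkewOfSize r μ lam :=
  ⟨h.1, h.2.1⟩

lemma setOf_skewOfSize_finite (n : ℕ) (μ : PartitionF) : {lam | SkewOfSize n μ lam}.Finite :=
  (setOf_psize_eq_finite _).subset fun _ h => h.2

lemma SkewOfSize.exists_eq_add {n : ℕ} {μ lam : PartitionF} (h : SkewOfSize n μ lam) :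
    ∃ g : ℕ → ℕ, lam.1 = μ.1 + g ∧ g.HasFiniteSupport ∧ ∑ᶠ i, g i = n := by
  have hsplit : lam.1 = μ.1 + (lam.1 - μ.1) := by
    funext i
    have := h.1 i
    simp only [Pi.add_apply, Pi.sub_apply]
    omega
  have hfin : (lam.1 - μ.1).HasFiniteSupport :=
    lam.2.hasFiniteSupport_s12.subset fun i hi => by simp at hi ⊢; omega
  refine ⟨_, hsplit, hfin, ?_⟩
  have := psize_eq_add_finsum hsplit hfin
  have := h.2
  omega

lemma SkewOfSize.exists_eq_add_single {μ ν : PartitionF} (h : SkewOfSize 1 μ ν) :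
    ∃ r, ν.1 = μ.1 + Pi.single r 1 := by
  obtain ⟨g, hν, hg, hsum⟩ := h.exists_eq_add
  obtain ⟨r, g', rfl, hg', hsum'⟩ := exists_eq_single_add_of_finsum_eq_succ hg hsum
  exact ⟨r, by rw [hν, eq_zero_of_finsum_eq_zero hg' hsum', add_zero]⟩

lemma SkewOfSize.exists_eq_add_single_add_single {μ lam : PartitionF} (h : SkewOfSize 2 μ lam) :
    ∃ r s, r ≤ s ∧ lam.1 = μ.1 + Pi.single r 1 + Pi.single s 1 := by
  obtain ⟨g, hlam, hg, hsum⟩ := h.exists_eq_add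
  obtain ⟨r, g', rfl, hg', hsum'⟩ := exists_eq_single_add_of_finsum_eq_succ hg hsum
  obtain ⟨s, g'', rfl, hg'', hsum''⟩ := exists_eq_single_add_of_finsum_eq_succ hg' hsum'
  rw [eq_zero_of_finsum_eq_zero hg'' hsum'', add_zero, ← add_assoc] at hlam
  rcases le_total r s with hrs | hsr
  · exact ⟨r, s, hrs, hlam⟩
  · exact ⟨s, r, hsr, by rw [hlam, add_right_comm]⟩

lemma lt_apply_of_eq_add_single_add_single {μ lam : PartitionF} {r s : ℕ} (hrs : r < s)
    (hlam : lam.1 = μ.1 + Pi.single r 1 + Pi.single s 1) :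
    (∀ i < r, μ.1 r < μ.1 i) ∧ ∀ i, r < i → i < s → μ.1 s < μ.1 i := by
  refine ⟨fun i hi => ?_, fun i hi hi' => ?_⟩
  · have := lam.2.1 hi.le
    simp [hlam, hi.ne, (hi.trans hrs).ne, hrs.ne] at this
    omega
  · have := lam.2.1 hi'.le
    simp [hlam, hi.ne', hi'.ne, hrs.ne'] at this
    omega

lemma neg_one_pow_nstat_mul {A : Type*} [CommRing A] {μ lam : PartitionF} {r s : ℕ}
    (hlam : lam.1 = μ.1 + Pi.single r 1 + Pi.single s 1) :
    (-1 : A) ^ nstat lam.1 * (-1) ^ nstat μ.1 = (-1) ^ (r + s) := by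
  rw [hlam, nstat_add_single_s12 ((μ.2.hasFiniteSupport_s12.add (hasFiniteSupport_single r))),
    nstat_add_single_s12 μ.2.hasFiniteSupport_s12, add_assoc, pow_add, mul_right_comm, ← pow_add,
    Even.neg_one_pow ⟨_, rfl⟩, one_mul]

/-! ## The columns of a two-box skew shape -/

def BoxColumns (μ lam : ℕ → ℕ) (a b : ℕ) : Prop :=
  ∀ k, 1 ≤ k → conjP lam k = conjP μ k + ((if k = a then 1 else 0) + if k = b then 1 else 0)

lemma BoxColumns.symm {μ lam : ℕ → ℕ} {a b : ℕ} (h : BoxColumns μ lam a b) :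
    BoxColumns μ lam b a :=
  fun k hk => by rw [h k hk, add_comm (ite _ _ _)]

lemma boxColumns_of_eq_add_single {μ ν lam : PartitionF} {r s : ℕ}
    (hν : ν.1 = μ.1 + Pi.single r 1) (hlam : lam.1 = ν.1 + Pi.single s 1) :
    BoxColumns μ.1 lam.1 (μ.1 r + 1) (ν.1 s + 1) :=
  fun k hk => by
    rw [hlam, conjP_add_single ν.2 s hk, hν, conjP_add_single μ.2 r hk, add_assoc]

lemma sum_range_ite_add_one_eq {N a : ℕ} (ha : 1 ≤ a) (haN : a ≤ N) :
    ∑ k ∈ Finset.range N, (if k + 1 = a then 1 else 0) = 1 := by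
  rw [Finset.sum_eq_single (a - 1) (fun k _ hk => if_neg (by omega))
    (fun h => absurd (Finset.mem_range.mpr (by omega)) h), if_pos (by omega)]

lemma BoxColumns.skewOfSize_two {μ lam : PartitionF} {a b : ℕ} (h : BoxColumns μ.1 lam.1 a b)
    (ha : 1 ≤ a) (hb : 1 ≤ b) : SkewOfSize 2 μ lam := by
  have hrows : ∀ i, μ.1 i ≤ lam.1 i :=
    le_of_conjP_le μ.2 lam.2 fun k hk => by rw [h k hk]; omega
  have hfirst : ∀ c, 1 ≤ c → c = a ∨ c = b → c ≤ lam.1 0 := fun c hc hcab =>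
    (lt_conjP_iff lam.2 hc 0).mp (by rw [h c hc]; split_ifs <;> omega)
  refine ⟨hrows, ?_⟩
  rw [psize_eq_sum_conjP lam le_rfl, psize_eq_sum_conjP μ (hrows 0),
    Finset.sum_congr rfl fun k _ => h (k + 1) (Nat.le_add_left 1 k), Finset.sum_add_distrib,
    Finset.sum_add_distrib, sum_range_ite_add_one_eq ha (hfirst a ha (Or.inl rfl)),
    sum_range_ite_add_one_eq hb (hfirst b hb (Or.inr rfl))]

lemma VDom.boxColumns {μ lam : ℕ → ℕ} {c : ℕ} (h : VDom μ lam c) : BoxColumns μ lam c c :=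
  fun k hk => by
    by_cases hkc : k = c
    · simp [hkc, h.1]
    · simp [hkc, h.2 k hk hkc]

lemma TwoCol.boxColumns {μ lam : ℕ → ℕ} {c : ℕ} (h : TwoCol μ lam c) :
    BoxColumns μ lam (c + 1) c :=
  fun k hk => by
    by_cases hkc : k = c
    · simp [hkc, h.1]
    · by_cases hkc' : k = c + 1
      · simp [hkc', h.2.1]
      · simp [hkc, hkc', h.2.2 k hk hkc hkc']

lemma BoxColumns.vDom_iff {μ lam : ℕ → ℕ} {a b k : ℕ} (h : BoxColumns μ lam a b) (hk : 1 ≤ k) :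
    VDom μ lam k ↔ a = b ∧ k = a := by
  constructor
  · rintro ⟨hk2, -⟩
    rw [h k hk] at hk2
    split_ifs at hk2 <;> omega
  · rintro ⟨rfl, rfl⟩
    refine ⟨by simp [h k hk], fun i hi hik => ?_⟩
    simp [h i hi, hik]

lemma BoxColumns.twoCol_iff {μ lam : ℕ → ℕ} {a b k : ℕ} (h : BoxColumns μ lam a b)
    (hba : b ≤ a) (hk : 1 ≤ k) : TwoCol μ lam k ↔ a = b + 1 ∧ k = b := by
  constructor
  · rintro ⟨hk1, hk2, -⟩
    rw [h k hk] at hk1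
    rw [h (k + 1) (by omega)] at hk2
    split_ifs at hk1 hk2 <;> omega
  · rintro ⟨rfl, rfl⟩
    refine ⟨by simp [h k hk], by simp [h (k + 1) (by omega)], fun i hi hik hik' => ?_⟩
    simp [h i hi, hik, hik']

/-! ## Pieri coefficients -/

/-- `mcount μ 0` is a junk value (`Nat.card` of an infinite set), so column `1` is treated
separately, as in `xiCoef`. -/
noncomputable def boxFactor {A : Type*} [CommRing A] (t : A) (μ : ℕ → ℕ) (c : ℕ) : A :=
  if c = 1 then 1 else 1 - t ^ mcount μ (c - 1)

section Coefficients

variable {A : Type*} [CommRing A] (t : A)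

lemma boxFactor_add_one {f : ℕ → ℕ} {j : ℕ} (hj : j ≠ 0) :
    boxFactor t f (j + 1) = 1 - t ^ mcount f j := by
  simp [boxFactor, hj]

lemma boxFactor_add_single_of_ne {f : ℕ → ℕ} (hf : IsPartitionFun f) {r : ℕ}
    (hg : IsPartitionFun (f + Pi.single r 1)) {c : ℕ} (hc : 1 ≤ c) (h₁ : c - 1 ≠ f r)
    (h₂ : c - 1 ≠ f r + 1) : boxFactor t (f + Pi.single r 1) c = boxFactor t f c := by
  by_cases hc1 : c = 1
  · simp only [boxFactor, if_pos hc1]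
  · have hm := mcount_add_single hf hg (j := c - 1) (by omega)
    rw [if_neg h₁, if_neg h₂, add_zero, add_zero] at hm
    simp only [boxFactor, if_neg hc1, hm]

lemma boxFactor_add_single_of_eq {f : ℕ → ℕ} (hf : IsPartitionFun f) {r : ℕ}
    (hg : IsPartitionFun (f + Pi.single r 1)) {c : ℕ} (hc : c = f r + 2) :
    boxFactor t (f + Pi.single r 1) c = 1 - t ^ (mcount f (f r + 1) + 1) := by
  have hm := mcount_add_single hf hg (j := f r + 1) (by omega)
  rw [if_neg (by omega), if_pos rfl, add_zero] at hm
  simp only [boxFactor, if_neg (show c ≠ 1 by omega), show c - 1 = f r + 1 by omega, hm]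

lemma xiCoef_of_boxColumns {μ lam : PartitionF} {a b : ℕ} (h : BoxColumns μ.1 lam.1 a b)
    (hb : 1 ≤ b) (hba : b ≤ a) :
    xiCoef t μ lam =
      (if a = b then
        (if a = 1 then 1 else (1 - t ^ mcount μ.1 (a - 1)) * (1 - t ^ (mcount μ.1 (a - 1) - 1)))
      else 0)
      + if a = b + 1 then (-t) ^ mcount μ.1 b * (1 + t) * boxFactor t μ.1 b else 0 := by
  have ha : 1 ≤ a := hb.trans hba
  unfold xiCoef
  congr 1
  · rw [finsum_eq_single _ a fun k hk => if_neg fun ⟨hk1, hv⟩ => hk ((h.vDom_iff hk1).mp hv).2]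
    by_cases hab : a = b
    · rw [if_pos ⟨ha, (h.vDom_iff ha).mpr ⟨hab, rfl⟩⟩, if_pos hab]
    · rw [if_neg fun ⟨_, hv⟩ => hab ((h.vDom_iff ha).mp hv).1, if_neg hab]
  · rw [finsum_eq_single _ b fun k hk =>
      if_neg fun ⟨hk1, hv⟩ => hk ((h.twoCol_iff hba hk1).mp hv).2]
    by_cases hab : a = b + 1
    · rw [if_pos ⟨hb, (h.twoCol_iff hba hb).mpr ⟨hab, rfl⟩⟩, if_pos hab, boxFactor]
    · rw [if_neg fun ⟨_, hv⟩ => hab ((h.twoCol_iff hba hb).mp hv).1, if_neg hab]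

lemma xiCoef_eq_zero_of_not_skewOfSize {μ lam : PartitionF} (h : ¬ SkewOfSize 2 μ lam) :
    xiCoef t μ lam = 0 := by
  unfold xiCoef
  rw [finsum_eq_zero_of_forall_eq_zero fun k =>
      if_neg fun ⟨hk, hv⟩ => h (hv.boxColumns.skewOfSize_two hk hk),
    finsum_eq_zero_of_forall_eq_zero fun k =>
      if_neg fun ⟨hk, hv⟩ => h (hv.boxColumns.skewOfSize_two (by omega) hk), add_zero]

noncomputable def pieriCoef (r : ℕ) (μ lam : PartitionF) : A :=
  if HStrip r μ lam then psiStrip t μ lam else 0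

noncomputable def pieriCoefSq (μ lam : PartitionF) : A :=
  ∑ᶠ ν, pieriCoef t 1 μ ν * pieriCoef t 1 ν lam

lemma psiStrip_eq_finprod {μ lam : PartitionF} {δ : ℕ → ℕ}
    (hδ : ∀ k, 1 ≤ k → conjP lam.1 k = conjP μ.1 k + δ k) :
    psiStrip t μ lam
      = ∏ᶠ i, if 1 ≤ i ∧ δ i = 0 ∧ δ (i + 1) = 1 then 1 - t ^ mcount μ.1 i else 1 := by
  refine finprod_congr fun i => ?_
  by_cases hi : 1 ≤ i
  · simp only [hi, true_and, hδ i hi, hδ (i + 1) (by omega), Nat.add_eq_left,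
      Nat.add_left_cancel_iff]
  · simp only [hi, false_and, if_false]

lemma psiStrip_of_one_box {μ ν : PartitionF} {c : ℕ} (hc : 1 ≤ c)
    (h : ∀ k, 1 ≤ k → conjP ν.1 k = conjP μ.1 k + if k = c then 1 else 0) :
    psiStrip t μ ν = boxFactor t μ.1 c := by
  rw [psiStrip_eq_finprod t h, finprod_eq_single _ (c - 1) fun i hi => ?_, boxFactor]
  · by_cases hc1 : c = 1 <;> simp (disch := omega) only [if_pos, if_neg, and_true]
  · refine if_neg fun ⟨_, _, hi1⟩ => ?_
    split_ifs at hi1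
    omega

lemma psiStrip_of_boxColumns {μ lam : PartitionF} {a b : ℕ} (hb : 1 ≤ b) (hba : b < a)
    (h : BoxColumns μ.1 lam.1 a b) :
    psiStrip t μ lam = boxFactor t μ.1 b * if a = b + 1 then 1 else boxFactor t μ.1 a := by
  rw [psiStrip_eq_finprod t h, finprod_eq_prod_of_mulSupport_subset _ (s := {b - 1, a - 1}) ?_,
    Finset.prod_pair (show b - 1 ≠ a - 1 by omega)]
  · unfold boxFactor
    congr 1
    · by_cases hb1 : b = 1 <;> simp (disch := omega) only [if_pos, if_neg, and_true]
    · by_cases hab : a = b + 1 <;> simp (disch := omega) only [if_pos, if_neg, and_true]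
  · intro i hi
    simp only [mem_mulSupport, ne_eq, ite_eq_right_iff, Classical.not_imp] at hi
    simp only [Finset.coe_insert, Finset.coe_singleton, Set.mem_insert_iff,
      Set.mem_singleton_iff]
    obtain ⟨⟨_, h0, h1⟩, -⟩ := hi
    split_ifs at h0 h1 <;> omega

lemma hStrip_one_of_eq_add_single {μ ν : PartitionF} {r : ℕ} (h : ν.1 = μ.1 + Pi.single r 1) :
    HStrip 1 μ ν := by
  refine ⟨fun i => by simp [h], ?_, fun k hk => ?_⟩
  · rw [psize_eq_add_finsum h (hasFiniteSupport_single r), finsum_single]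
  · rw [h, conjP_add_single μ.2 r hk]
    split_ifs <;> omega

lemma pieriCoef_one_of_eq_add_single {μ ν : PartitionF} {r : ℕ}
    (h : ν.1 = μ.1 + Pi.single r 1) : pieriCoef t 1 μ ν = boxFactor t μ.1 (μ.1 r + 1) := by
  rw [pieriCoef, if_pos (hStrip_one_of_eq_add_single h),
    psiStrip_of_one_box t (Nat.le_add_left 1 _) fun k hk => by rw [h, conjP_add_single μ.2 r hk]]

lemma pieriCoef_two_of_boxColumns {μ lam : PartitionF} {a b : ℕ} (hb : 1 ≤ b) (hba : b ≤ a)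
    (h : BoxColumns μ.1 lam.1 a b) :
    pieriCoef t 2 μ lam
      = if a = b then 0 else boxFactor t μ.1 b * if a = b + 1 then 1 else boxFactor t μ.1 a := by
  obtain ⟨hrows, hsize⟩ := h.skewOfSize_two (hb.trans hba) hb
  by_cases hab : a = b
  · subst hab
    refine (if_neg fun hs => ?_).trans (if_pos rfl).symm
    have := hs.2.2 a hb
    simp [h a hb] at this
  · have hstrip : HStrip 2 μ lam := ⟨hrows, hsize, fun k hk => by
      have := h k hk
      split_ifs at this <;> omega⟩
    rw [pieriCoef, if_pos hstrip, if_neg hab, psiStrip_of_boxColumns t hb (by omega) h]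

lemma pieriCoefSq_eq_sum {μ lam : PartitionF} {r s : ℕ}
    (hlam : lam.1 = μ.1 + Pi.single r 1 + Pi.single s 1) (S : Finset PartitionF)
    (hS : ∀ ν : PartitionF, ν.1 = μ.1 + Pi.single r 1 ∨ ν.1 = μ.1 + Pi.single s 1 → ν ∈ S) :
    pieriCoefSq t μ lam = ∑ ν ∈ S, pieriCoef t 1 μ ν * pieriCoef t 1 ν lam := by
  refine finsum_eq_sum_of_support_subset _ fun ν hν => hS ν ?_
  have h₁ : HStrip 1 μ ν := by
    by_contra h
    simp [pieriCoef, h] at hν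
  have h₂ : HStrip 1 ν lam := by
    by_contra h
    simp [pieriCoef, h] at hν
  obtain ⟨r', hr'⟩ := h₁.skewOfSize.exists_eq_add_single
  have hle := h₂.1 r'
  rw [hr', hlam] at hle
  rcases eq_or_ne r' r with rfl | hr
  · exact Or.inl hr'
  rcases eq_or_ne r' s with rfl | hs
  · exact Or.inr hr'
  simp [hr, hs] at hle

lemma pieriCoefSq_eq_of_unique {μ ν lam : PartitionF} {r s : ℕ}
    (hν : ν.1 = μ.1 + Pi.single r 1) (hlam : lam.1 = ν.1 + Pi.single s 1)
    (huniq : ∀ ν' : PartitionF, ν'.1 = μ.1 + Pi.single s 1 → ν' = ν) :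
    pieriCoefSq t μ lam = boxFactor t μ.1 (μ.1 r + 1) * boxFactor t ν.1 (ν.1 s + 1) := by
  rw [pieriCoefSq_eq_sum t (hlam.trans (by rw [hν])) {ν} fun ν' h =>
      Finset.mem_singleton.mpr (h.elim (fun h' => Subtype.ext (h'.trans hν.symm)) (huniq ν')),
    Finset.sum_singleton, pieriCoef_one_of_eq_add_single t hν,
    pieriCoef_one_of_eq_add_single t hlam]

lemma pieriCoefSq_eq_add {μ νr νs lam : PartitionF} {r s : ℕ} (hrs : r ≠ s)
    (hνr : νr.1 = μ.1 + Pi.single r 1) (hνs : νs.1 = μ.1 + Pi.single s 1)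
    (hlam : lam.1 = μ.1 + Pi.single r 1 + Pi.single s 1) :
    pieriCoefSq t μ lam
      = boxFactor t μ.1 (μ.1 r + 1) * boxFactor t νr.1 (νr.1 s + 1)
        + boxFactor t μ.1 (μ.1 s + 1) * boxFactor t νs.1 (νs.1 r + 1) := by
  have hne : νr ≠ νs := fun h => by
    have := congrFun (congrArg Subtype.val h) r
    simp [hνr, hνs, hrs] at this
  rw [pieriCoefSq_eq_sum t hlam {νr, νs} fun ν h => by
      rcases h with h | h
      · exact Finset.mem_insert.mpr (Or.inl (Subtype.ext (h.trans hνr.symm)))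
      · exact Finset.mem_insert.mpr
          (Or.inr (Finset.mem_singleton.mpr (Subtype.ext (h.trans hνs.symm)))),
    Finset.sum_pair hne, pieriCoef_one_of_eq_add_single t hνr,
    pieriCoef_one_of_eq_add_single t (hlam.trans (by rw [hνr])),
    pieriCoef_one_of_eq_add_single t hνs,
    pieriCoef_one_of_eq_add_single t (hlam.trans (by rw [hνs, add_right_comm]))]

/-! ## The three shapes -/

theorem xiCoef_eq_of_same_row {μ lam : PartitionF} {r : ℕ}
    (hlam : lam.1 = μ.1 + Pi.single r 1 + Pi.single r 1) :
    xiCoef t μ lam = (-1) ^ nstat lam.1 * (-1) ^ nstat μ.1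
      * (2 * pieriCoef t 2 μ lam - pieriCoefSq t μ lam) := by
  have habove : ∀ i < r, μ.1 r + 1 < μ.1 i := fun i hi => by
    have := lam.2.1 hi.le
    simp [hlam, hi.ne] at this
    omega
  have hν : IsPartitionFun (μ.1 + Pi.single r 1) :=
    isPartitionFun_add_single μ.2 fun i hi => by have := habove i hi; omega
  have hcols := boxColumns_of_eq_add_single (ν := ⟨_, hν⟩) rfl hlam
  simp only [Pi.add_apply, Pi.single_eq_same] at hcols
  have hm : mcount μ.1 (μ.1 r + 1) = 0 :=
    (mcount_eq_sub_of_rows μ.2.1 habove (fun i h₁ h₂ => absurd h₂ (not_lt.mpr h₁))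
      (Nat.lt_succ_self _)).trans (Nat.sub_self r)
  rw [xiCoef_of_boxColumns t hcols.symm (by omega) (by omega),
    pieriCoef_two_of_boxColumns t (by omega) (by omega) hcols.symm,
    pieriCoefSq_eq_of_unique t (ν := ⟨_, hν⟩) rfl hlam fun ν' h => Subtype.ext h,
    neg_one_pow_nstat_mul hlam]
  simp only [Pi.add_apply, Pi.single_eq_same]
  rw [boxFactor_add_single_of_eq t μ.2 hν rfl, hm]
  simp (disch := omega) only [if_pos, if_neg, ↓reduceIte, ← two_mul, pow_mul, neg_one_sq,
    one_pow, one_mul, pow_zero]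
  ring

theorem xiCoef_eq_of_same_column {μ lam : PartitionF} {r s : ℕ} (hrs : r < s)
    (heq : μ.1 r = μ.1 s) (hlam : lam.1 = μ.1 + Pi.single r 1 + Pi.single s 1) :
    xiCoef t μ lam = (-1) ^ nstat lam.1 * (-1) ^ nstat μ.1
      * (2 * pieriCoef t 2 μ lam - pieriCoefSq t μ lam) := by
  obtain ⟨habove, hbetween⟩ := lt_apply_of_eq_add_single_add_single hrs hlam
  obtain rfl : s = r + 1 := by
    by_contra hs
    have := hbetween (r + 1) (by omega) (by omega)
    have := μ.2.1 (Nat.le_add_right r 1)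
    omega
  have hν : IsPartitionFun (μ.1 + Pi.single r 1) := isPartitionFun_add_single μ.2 habove
  have hcols := boxColumns_of_eq_add_single (ν := ⟨_, hν⟩) rfl hlam
  simp only [Pi.add_apply, Pi.single_eq_of_ne (Nat.succ_ne_self r), add_zero, ← heq] at hcols
  have huniq : ∀ ν : PartitionF, ν.1 = μ.1 + Pi.single (r + 1) 1 → ν = ⟨_, hν⟩ := fun ν h => by
    have := ν.2.1 (Nat.le_succ r)
    simp [h, heq] at this
  rw [xiCoef_of_boxColumns t hcols (by omega) le_rfl,
    pieriCoef_two_of_boxColumns t (by omega) le_rfl hcols,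
    pieriCoefSq_eq_of_unique t rfl hlam huniq, neg_one_pow_nstat_mul hlam, ← add_assoc,
    ← two_mul, pow_succ, pow_mul, neg_one_sq, one_pow, one_mul]
  simp only [Pi.add_apply, Pi.single_eq_of_ne (Nat.succ_ne_self r), add_zero, ← heq]
  by_cases h0 : μ.1 r = 0
  · simp [boxFactor, h0]
  · have hm := mcount_add_single μ.2 hν (Nat.one_le_iff_ne_zero.mpr h0)
    rw [if_pos rfl, if_neg (by omega), add_zero] at hm
    simp (disch := omega) only [boxFactor, if_pos, if_neg, ↓reduceIte, Nat.add_sub_cancel,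
      show mcount (μ.1 + Pi.single r 1) (μ.1 r) = mcount μ.1 (μ.1 r) - 1 by omega]
    ring

theorem xiCoef_eq_of_two_rows {μ lam : PartitionF} {r s : ℕ} (hrs : r < s)
    (hlt : μ.1 s < μ.1 r) (hlam : lam.1 = μ.1 + Pi.single r 1 + Pi.single s 1) :
    xiCoef t μ lam = (-1) ^ nstat lam.1 * (-1) ^ nstat μ.1
      * (2 * pieriCoef t 2 μ lam - pieriCoefSq t μ lam) := by
  obtain ⟨habove, hbetween⟩ := lt_apply_of_eq_add_single_add_single hrs hlam
  have hνr := isPartitionFun_add_single μ.2 habove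
  have hνs := isPartitionFun_add_single μ.2 fun i hi =>
    (lt_or_ge r i).elim (fun hri => hbetween i hri hi) fun hir => hlt.trans_le (μ.2.1 hir)
  have hcols := boxColumns_of_eq_add_single (ν := ⟨_, hνr⟩) rfl hlam
  simp only [Pi.add_apply, Pi.single_eq_of_ne hrs.ne', add_zero] at hcols
  rw [xiCoef_of_boxColumns t hcols (by omega) (by omega),
    pieriCoef_two_of_boxColumns t (by omega) (by omega) hcols,
    pieriCoefSq_eq_add t hrs.ne (νr := ⟨_, hνr⟩) (νs := ⟨_, hνs⟩) rfl rfl hlam,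
    neg_one_pow_nstat_mul hlam]
  simp only [Pi.add_apply, Pi.single_eq_of_ne hrs.ne', Pi.single_eq_of_ne hrs.ne, add_zero]
  rw [boxFactor_add_single_of_ne t μ.2 hνr (by omega) (by omega) (by omega),
    boxFactor_add_one t (show μ.1 r ≠ 0 by omega)]
  rcases eq_or_ne (μ.1 r) (μ.1 s + 1) with hadj | hadj
  · have hm : mcount μ.1 (μ.1 r) = s - r := by
      refine mcount_eq_sub_of_rows μ.2.1 habove (fun i h₁ h₂ => ?_) hlt
      rcases h₁.eq_or_lt with rfl | h₁
      · rfl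
      · exact le_antisymm (μ.2.1 h₁.le) (hadj ▸ hbetween i h₁ h₂)
    have hsign : (-1 : A) ^ (r + s) = (-1) ^ (s - r) := by
      rw [show r + s = 2 * r + (s - r) by omega, pow_add, pow_mul, neg_one_sq, one_pow, one_mul]
    rw [boxFactor_add_single_of_eq t μ.2 hνs (by omega), ← hadj, hm, hsign, neg_pow t]
    simp (disch := omega) only [if_pos, if_neg, ↓reduceIte]
    ring
  · rw [boxFactor_add_single_of_ne t μ.2 hνs (by omega) (by omega) (by omega),
      boxFactor_add_one t (show μ.1 r ≠ 0 by omega)]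
    simp (disch := omega) only [if_pos, if_neg]
    ring

theorem xiCoef_eq_pieriCoef (μ lam : PartitionF) :
    xiCoef t μ lam = (-1) ^ nstat lam.1 * (-1) ^ nstat μ.1
      * (2 * pieriCoef t 2 μ lam - pieriCoefSq t μ lam) := by
  by_cases hskew : SkewOfSize 2 μ lam
  · obtain ⟨r, s, hrs, hlam⟩ := hskew.exists_eq_add_single_add_single
    rcases hrs.eq_or_lt with rfl | hrs
    · exact xiCoef_eq_of_same_row t hlam
    rcases (μ.2.1 hrs.le).eq_or_lt with heq | hlt
    · exact xiCoef_eq_of_same_column t hrs heq.symm hlam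
    · exact xiCoef_eq_of_two_rows t hrs hlt hlam
  · have h₂ : pieriCoef t 2 μ lam = 0 := if_neg fun h => hskew h.skewOfSize
    have hsq : pieriCoefSq t μ lam = 0 := finsum_eq_zero_of_forall_eq_zero fun ν => by
      by_cases h : HStrip 1 μ ν ∧ HStrip 1 ν lam
      · exact absurd (h.1.skewOfSize.trans h.2.skewOfSize) hskew
      · rcases not_and_or.mp h with h | h <;> simp [pieriCoef, h]
    rw [xiCoef_eq_zero_of_not_skewOfSize t hskew, h₂, hsq]
    ring

variable {Q : PartitionF → A}

lemma mul_eq_sum_pieriCoef {r : ℕ} {μ : PartitionF}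
    (h : Q (onerow r) * Q μ
      = ∑ᶠ lam : PartitionF, (if HStrip r μ lam then psiStrip t μ lam else 0) * Q lam)
    {S : Finset PartitionF} (hS : ∀ lam, SkewOfSize r μ lam → lam ∈ S) :
    Q (onerow r) * Q μ = ∑ lam ∈ S, pieriCoef t r μ lam * Q lam := by
  refine h.trans (finsum_eq_sum_of_support_subset _ fun lam hlam => hS lam ?_)
  by_contra hskew
  exact hlam (by beta_reduce; rw [if_neg fun h => hskew h.skewOfSize, zero_mul])

lemma mul_mul_eq_sum_pieriCoefSq
    (h : ∀ μ : PartitionF, Q (onerow 1) * Q μ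
      = ∑ᶠ lam : PartitionF, (if HStrip 1 μ lam then psiStrip t μ lam else 0) * Q lam)
    (μ : PartitionF) :
    Q (onerow 1) * (Q (onerow 1) * Q μ)
      = ∑ lam ∈ (setOf_skewOfSize_finite 2 μ).toFinset, pieriCoefSq t μ lam * Q lam := by
  set T₁ := (setOf_skewOfSize_finite 1 μ).toFinset
  have hsq : ∀ lam, pieriCoefSq t μ lam = ∑ ν ∈ T₁, pieriCoef t 1 μ ν * pieriCoef t 1 ν lam :=
    fun lam => finsum_eq_sum_of_support_subset _ fun ν hν => by
      by_contra hT
      refine hν ?_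
      beta_reduce
      rw [pieriCoef, if_neg fun h => hT ((Set.Finite.mem_toFinset _).mpr h.skewOfSize), zero_mul]
  rw [mul_eq_sum_pieriCoef t (h μ) (S := T₁) fun ν hν => (Set.Finite.mem_toFinset _).mpr hν,
    Finset.mul_sum]
  simp_rw [hsq, Finset.sum_mul]
  rw [Finset.sum_comm]
  refine Finset.sum_congr rfl fun ν hν => ?_
  rw [mul_left_comm, mul_eq_sum_pieriCoef t (h ν) fun lam hlam =>
      (setOf_skewOfSize_finite 2 μ).mem_toFinset.mpr
        (show SkewOfSize 2 μ lam from ((Set.Finite.mem_toFinset _).mp hν).trans hlam),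
    Finset.mul_sum]
  exact Finset.sum_congr rfl fun lam _ => by ring

end Coefficients

/-- Let `Q λ` be the Hall–Littlewood `Q`-functions with parameter `t` (characterized here by
the Pieri rules for multiplication by `Q_{(1)}`, `Q_{(2)}` and the identity
`(1−t²) p₂ = 2 Q_{(2)} − Q_{(1)}²`), and set `Q̃_λ = (−1)^(n(λ)) Q_λ`.  Then for every
partition `μ`,
`(1 − t²) p₂ · Q̃_μ = Σ_λ ξ_{λ/μ}(t) Q̃_λ`,
where `ξ_{λ/μ}(t)` vanishes unless `μ ⊆ λ`, `|λ| = |μ| + 2` with the two boxes of `λ∖μ` in a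
single column or in two consecutive columns, in which cases it is given by the explicit
formulas of `xiCoef`. -/
theorem stmt12 {A : Type*} [CommRing A] (t : A) (p₂ : A) (Q : PartitionF → A)
    (hPieri : ∀ r : ℕ, r = 1 ∨ r = 2 → ∀ μ : PartitionF,
      Q (onerow r) * Q μ
        = ∑ᶠ lam : PartitionF, (if HStrip r μ lam then psiStrip t μ lam else 0) * Q lam)
    (hp2 : (1 - t ^ 2) * p₂ = 2 * Q (onerow 2) - Q (onerow 1) * Q (onerow 1)) :
    ∀ μ : PartitionF,
      (1 - t ^ 2) * p₂ * ((-1 : A) ^ nstat μ.val * Q μ)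
        = ∑ᶠ lam : PartitionF, xiCoef t μ lam * ((-1 : A) ^ nstat lam.val * Q lam) := by
  intro μ
  set T₂ := (setOf_skewOfSize_finite 2 μ).toFinset
  have hxi : ∑ᶠ lam : PartitionF, xiCoef t μ lam * ((-1 : A) ^ nstat lam.val * Q lam)
      = ∑ lam ∈ T₂, xiCoef t μ lam * ((-1 : A) ^ nstat lam.val * Q lam) :=
    finsum_eq_sum_of_support_subset _ fun lam hlam => by
      by_contra hT
      simp [xiCoef_eq_zero_of_not_skewOfSize t (by simpa [T₂] using hT)] at hlam
  have hL : (1 - t ^ 2) * p₂ * ((-1 : A) ^ nstat μ.val * Q μ) = (-1 : A) ^ nstat μ.val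
      * (2 * (Q (onerow 2) * Q μ) - Q (onerow 1) * (Q (onerow 1) * Q μ)) := by
    rw [hp2]
    ring
  rw [hL, hxi, mul_eq_sum_pieriCoef t (hPieri 2 (Or.inr rfl) μ) (S := T₂)
      fun lam h => (Set.Finite.mem_toFinset _).mpr h,
    mul_mul_eq_sum_pieriCoefSq t (hPieri 1 (Or.inl rfl)) μ, Finset.mul_sum,
    ← Finset.sum_sub_distrib, Finset.mul_sum]
  refine Finset.sum_congr rfl fun lam _ => ?_
  have hsq : (-1 : A) ^ nstat lam.val * (-1) ^ nstat lam.val = 1 := by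
    rw [← pow_add, Even.neg_one_pow ⟨_, rfl⟩]
  rw [xiCoef_eq_pieriCoef]
  linear_combination
    -(-1 : A) ^ nstat μ.val * (2 * pieriCoef t 2 μ lam - pieriCoefSq t μ lam) * Q lam * hsq
end
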